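/- arXiv:1801.00173 — 4 statements merged into one kernel-verified Lean document; each statement's English description precedes it below -/
import Mathlib

section
/- If gradient descent on $L(w) = \frac{1}{2n}\|Xw - y\|^2$ with $w_0 = 0$ produces a sequence $(w_t)$ converging to a point $w_\star$ with $X w_\star = y$, and $X$ has full row rank, then $w_\star = X^\top (XX^\top)^{-1} y$, the minimum norm solution. -/
open Matrix

/-- If gradient descent on the least squares loss, started at `0`, converges to a
solution `w⋆` of `Xw = y` and `X` has full row rank, then `w⋆` is the minimum
norm solution `Xᵀ(XXᵀ)⁻¹y`. -/
theorem stmt3 {n d : ℕ} (hnd : n ≤ d) (X : Matrix (Fin n) (Fin d) ℝ)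
    (hrank : X.rank = n) (y : Fin n → ℝ)
    (η : ℕ → ℝ) (w : ℕ → Fin d → ℝ) (h0 : w 0 = 0)
    (hupd : ∀ t, w (t + 1) = w t - η t • ((n : ℝ)⁻¹ • (Xᵀ *ᵥ (X *ᵥ w t - y))))
    (wstar : Fin d → ℝ)
    (hlim : Filter.Tendsto w Filter.atTop (nhds wstar))
    (hsol : X *ᵥ wstar = y) :
    wstar = Xᵀ *ᵥ ((X * Xᵀ)⁻¹ *ᵥ y) := by
  -- the row space of X, as range of Xᵀ.mulVecLin
  set S : Submodule ℝ (Fin d → ℝ) := LinearMap.range Xᵀ.mulVecLin with hS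
  -- all iterates lie in S
  have hmem : ∀ t, w t ∈ S := by
    intro t
    induction t with
    | zero => rw [h0]; exact S.zero_mem
    | succ t ih =>
      rw [hupd t]
      refine S.sub_mem ih (S.smul_mem _ (S.smul_mem _ ?_))
      exact ⟨X *ᵥ w t - y, rfl⟩
  -- S is closed (finite dimensional), so the limit is in S
  have hclosed : IsClosed (S : Set (Fin d → ℝ)) := Submodule.closed_of_finiteDimensional S
  have hstar : wstar ∈ S := hclosed.mem_of_tendsto hlim (Filter.Eventually.of_forall hmem)
  obtain ⟨c, hc⟩ := hstar
  rw [Matrix.mulVecLin_apply] at hc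
  -- X * Xᵀ is invertible
  have hrk : (X * Xᵀ).rank = n := by rw [Matrix.rank_self_mul_transpose, hrank]
  have hsurj : Function.Surjective (X * Xᵀ).mulVecLin := by
    rw [← LinearMap.range_eq_top]
    apply Submodule.eq_top_of_finrank_eq
    rw [← Matrix.rank, hrk, Module.finrank_pi]
    simp
  have hunit : IsUnit (X * Xᵀ) :=
    Matrix.mulVec_surjective_iff_isUnit.mp (by exact hsurj)
  have hdet : IsUnit (X * Xᵀ).det := (Matrix.isUnit_iff_isUnit_det _).mp hunit
  -- compute
  have hXc : (X * Xᵀ) *ᵥ c = y := by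
    rw [← Matrix.mulVec_mulVec, hc, hsol]
  have : (X * Xᵀ)⁻¹ *ᵥ y = c := by
    rw [← hXc, Matrix.mulVec_mulVec, Matrix.nonsing_inv_mul _ hdet, Matrix.one_mulVec]
  rw [this, hc]
end

section
/- Consider the deep linear square loss $L(W_1, \dots, W_{H+1}) = \frac{1}{2}\|W_{H+1} \cdots W_1 X - Y\|_F^2$ viewed as a function of all weight matrices, with layer widths $N_0 = d, N_1, \dots, N_{H+1} = d'$ and $n$ data points. If there exists $k$ with $N_k N_{k-1} > n \cdot \min(N_k, N_{k+1}, \dots, N_{H+1})$, and $w^*$ is a point with zero loss, then the Hessian of $L$ at $w^*$ has a zero eigenvalue. -/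
open Matrix

/-- The output of a deep linear network: `layerOut N X W k = W_{k} ⋯ W_1 X`. -/
noncomputable def layerOut {n : ℕ} (N : ℕ → ℕ) (X : Matrix (Fin (N 0)) (Fin n) ℝ)
    (W : ∀ k : ℕ, Matrix (Fin (N (k + 1))) (Fin (N k)) ℝ) :
    (k : ℕ) → Matrix (Fin (N k)) (Fin n) ℝ
  | 0 => X
  | (k + 1) => W k * layerOut N X W k

/-- Lift a finitely-indexed family of weights to an `ℕ`-indexed family. -/
noncomputable def liftW (H : ℕ) (N : ℕ → ℕ)
    (W : ∀ k : Fin (H + 1), Fin (N ((k : ℕ) + 1)) → Fin (N (k : ℕ)) → ℝ) :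
    ∀ m : ℕ, Matrix (Fin (N (m + 1))) (Fin (N m)) ℝ :=
  fun m => if h : m < H + 1 then Matrix.of (W ⟨m, h⟩) else 0

/-- The rank-one perturbation supported at a single layer. -/
noncomputable def pertW (H : ℕ) (N : ℕ → ℕ) (i : Fin (H + 1))
    (A : Fin (N ((i : ℕ) + 1)) → Fin (N (i : ℕ)) → ℝ) :
    ∀ k : Fin (H + 1), Fin (N ((k : ℕ) + 1)) → Fin (N (k : ℕ)) → ℝ :=
  Pi.single i A

theorem aux_second_deriv {E : Type*} [NormedAddCommGroup E] [NormedSpace ℝ E]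
    (f : E → ℝ) (x v : E) (hf : ContDiff ℝ 2 f)
    (hconst : ∀ t : ℝ, f (x + t • v) = f x) :
    iteratedFDeriv ℝ 2 f x ![v, v] = 0 := by
  have hc : ∀ t : ℝ, HasDerivAt (fun s : ℝ => x + s • v) v t := fun t => by
    simpa using ((hasDerivAt_id t).smul_const v).const_add x
  have hdf : ∀ t : ℝ, fderiv ℝ f (x + t • v) v = 0 := by
    intro t
    have h1 : HasDerivAt (fun s : ℝ => f (x + s • v)) (fderiv ℝ f (x + t • v) v) t :=
      (hf.differentiable (by norm_num) (x + t • v)).hasFDerivAt.comp_hasDerivAt t (hc t)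
    have h2 : (fun s : ℝ => f (x + s • v)) = fun _ => f x := funext hconst
    rw [h2] at h1
    exact h1.unique (hasDerivAt_const t (f x))
  have hfd : ContDiff ℝ 1 (fderiv ℝ f) := hf.fderiv_right (by norm_num)
  have h2 : HasFDerivAt (fderiv ℝ f) (fderiv ℝ (fderiv ℝ f) x) x :=
    ((hfd.differentiable (by norm_num)) x).hasFDerivAt
  have hF : HasFDerivAt (fun y => fderiv ℝ f y v)
      ((ContinuousLinearMap.apply ℝ ℝ v).comp (fderiv ℝ (fderiv ℝ f) x)) x :=
    ((ContinuousLinearMap.apply ℝ ℝ v).hasFDerivAt).comp x h2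
  have hF0 : HasFDerivAt (fun y => fderiv ℝ f y v)
      ((ContinuousLinearMap.apply ℝ ℝ v).comp (fderiv ℝ (fderiv ℝ f) x)) (x + (0:ℝ) • v) := by
    simpa using hF
  have h3 : HasDerivAt (fun t : ℝ => fderiv ℝ f (x + t • v) v)
      (fderiv ℝ (fderiv ℝ f) x v v) 0 := by
    simpa [Function.comp_def] using hF0.comp_hasDerivAt 0 (hc 0)
  have h4 : (fun t : ℝ => fderiv ℝ f (x + t • v) v) = fun _ => 0 := funext hdf
  rw [h4] at h3
  have h5 := h3.unique (hasDerivAt_const 0 (0:ℝ))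
  rw [iteratedFDeriv_two_apply]
  simpa using h5

theorem aux_kernel {a b c d : ℕ} (Q : Matrix (Fin c) (Fin a) ℝ) (B : Matrix (Fin b) (Fin d) ℝ)
    (hdim : c * d < a * b) :
    ∃ V : Matrix (Fin a) (Fin b) ℝ, V ≠ 0 ∧ Q * (V * B) = 0 := by
  let Ψ : Matrix (Fin a) (Fin b) ℝ →ₗ[ℝ] Matrix (Fin c) (Fin d) ℝ :=
    { toFun := fun V => Q * (V * B)
      map_add' := fun V1 V2 => by rw [Matrix.add_mul, Matrix.mul_add]
      map_smul' := fun r V => by simp [Matrix.smul_mul, Matrix.mul_smul] }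
  have hni : ¬ Function.Injective Ψ := by
    intro hinj
    have h := LinearMap.finrank_le_finrank_of_injective hinj
    simp only [Module.finrank_matrix, Fintype.card_fin, Module.finrank_self, mul_one] at h
    omega
  simp only [Function.Injective, not_forall] at hni
  obtain ⟨V1, V2, hEq, hne⟩ := hni
  refine ⟨V1 - V2, sub_ne_zero.mpr hne, ?_⟩
  have : Ψ (V1 - V2) = 0 := by rw [map_sub, hEq, sub_self]
  simpa [Ψ, Matrix.sub_mul, Matrix.mul_sub] using this

theorem aux_smooth {H n : ℕ} (N : ℕ → ℕ) (X : Matrix (Fin (N 0)) (Fin n) ℝ)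
    (Y : Matrix (Fin (N (H + 1))) (Fin n) ℝ) :
    ContDiff ℝ 2 (fun W : (∀ k : Fin (H+1), Fin (N ((k:ℕ)+1)) → Fin (N (k:ℕ)) → ℝ) =>
      (1/2 : ℝ) * ∑ i, ∑ j, ((layerOut N X (liftW H N W) (H+1) - Y) i j)^2) := by
  have key : ∀ (m : ℕ) (i : Fin (N m)) (j : Fin n),
      ContDiff ℝ 2 (fun W : (∀ k : Fin (H+1), Fin (N ((k:ℕ)+1)) → Fin (N (k:ℕ)) → ℝ) =>
        layerOut N X (liftW H N W) m i j) := by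
    intro m
    induction m with
    | zero => intro i j; simpa [layerOut] using contDiff_const
    | succ m ih =>
      intro i j
      by_cases h : m < H + 1
      · have heq : (fun W : (∀ k : Fin (H+1), Fin (N ((k:ℕ)+1)) → Fin (N (k:ℕ)) → ℝ) =>
            layerOut N X (liftW H N W) (m+1) i j)
            = fun W => ∑ l, W ⟨m, h⟩ i l * layerOut N X (liftW H N W) m l j := by
          funext W
          simp [layerOut, liftW, Matrix.mul_apply, dif_pos h, show m ≤ H by omega]
        rw [heq]
        apply ContDiff.sum
        intro l _
        exact (((ContinuousLinearMap.proj l).comp ((ContinuousLinearMap.proj i).comp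
          (ContinuousLinearMap.proj (R := ℝ)
            (φ := fun k : Fin (H+1) => Fin (N ((k:ℕ)+1)) → Fin (N (k:ℕ)) → ℝ)
            ⟨m, h⟩))).contDiff).mul (ih l j)
      · have heq : (fun W : (∀ k : Fin (H+1), Fin (N ((k:ℕ)+1)) → Fin (N (k:ℕ)) → ℝ) =>
            layerOut N X (liftW H N W) (m+1) i j) = fun _ => 0 := by
          funext W
          simp [layerOut, liftW, dif_neg h, show ¬ m ≤ H by omega]
        rw [heq]; exact contDiff_const
  have heq : (fun W : (∀ k : Fin (H+1), Fin (N ((k:ℕ)+1)) → Fin (N (k:ℕ)) → ℝ) =>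
      (1/2 : ℝ) * ∑ i, ∑ j, ((layerOut N X (liftW H N W) (H+1) - Y) i j)^2)
      = fun W => (1/2 : ℝ) * ∑ i, ∑ j,
        ((layerOut N X (liftW H N W) (H+1)) i j - Y i j)^2 := by
    funext W; simp [Matrix.sub_apply]
  rw [heq]
  exact contDiff_const.mul (ContDiff.sum fun i _ => ContDiff.sum fun j _ =>
    ((key (H+1) i j).sub contDiff_const).pow 2)

/-- For the deep linear square loss `L(W₁,…,W_{H+1}) = ½‖W_{H+1}⋯W₁X - Y‖²_F`
with widths `N 0 = d, …, N (H+1) = d'`, if some layer `k` satisfies the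
overparametrization condition `N k · N (k-1) > n · min(N k, …, N (H+1))`, then at
any zero-loss point `W*` the Hessian of `L` has a zero eigenvalue: there is a
nonzero direction in which the second derivative (quadratic form) vanishes. -/
theorem stmt13 {H n : ℕ} (N : ℕ → ℕ) (X : Matrix (Fin (N 0)) (Fin n) ℝ)
    (Y : Matrix (Fin (N (H + 1))) (Fin n) ℝ)
    (L : (∀ k : Fin (H + 1), Fin (N ((k : ℕ) + 1)) → Fin (N (k : ℕ)) → ℝ) → ℝ)
    (hL : ∀ W, L W = (1 / 2 : ℝ) * ∑ i, ∑ j,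
      ((layerOut N X
          (fun k => if h : k < H + 1 then Matrix.of (W ⟨k, h⟩) else 0) (H + 1) - Y) i j) ^ 2)
    (k : ℕ) (hk1 : 1 ≤ k) (hk2 : k ≤ H + 1)
    (hover : n * (Finset.Icc k (H + 1)).inf' (Finset.nonempty_Icc.mpr hk2) N < N k * N (k - 1))
    (Wstar : ∀ k : Fin (H + 1), Fin (N ((k : ℕ) + 1)) → Fin (N (k : ℕ)) → ℝ)
    (hzero : L Wstar = 0) :
    ∃ v : (∀ k : Fin (H + 1), Fin (N ((k : ℕ) + 1)) → Fin (N (k : ℕ)) → ℝ),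
      v ≠ 0 ∧ iteratedFDeriv ℝ 2 L Wstar ![v, v] = 0 := by
  have hL' : ∀ W, L W = (1 / 2 : ℝ) * ∑ i, ∑ j,
      ((layerOut N X (liftW H N W) (H + 1) - Y) i j) ^ 2 := hL
  clear hL hzero
  obtain ⟨k', rfl⟩ : ∃ k', k = k' + 1 := ⟨k - 1, (Nat.succ_pred_eq_of_pos hk1).symm⟩
  have hk'H : k' < H + 1 := by omega
  set idx : Fin (H + 1) := ⟨k', hk'H⟩ with hidx
  set W' := liftW H N Wstar with hW'
  set B := layerOut N X W' k' with hB
  -- components away from k' are unchanged by the perturbation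
  have hliftne : ∀ (m : ℕ), m ≠ k' → ∀ (t : ℝ) (A : Fin (N (k' + 1)) → Fin (N k') → ℝ),
      liftW H N (Wstar + t • pertW H N idx A) m = W' m := by
    intro m hm t A
    by_cases h : m < H + 1
    · have hne : (⟨m, h⟩ : Fin (H + 1)) ≠ idx := by
        simp only [hidx, ne_eq, Fin.mk.injEq]; exact hm
      simp only [hW', liftW, dif_pos h]
      have : (Wstar + t • pertW H N idx A) ⟨m, h⟩ = Wstar ⟨m, h⟩ := by
        simp [pertW, Pi.single_eq_of_ne hne]
      rw [this]
    · simp only [hW', liftW, dif_neg h]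
  -- claim 1 : layers below k' are unchanged
  have claim1 : ∀ m, m ≤ k' → ∀ (t : ℝ) (A : Fin (N (k' + 1)) → Fin (N k') → ℝ),
      layerOut N X (liftW H N (Wstar + t • pertW H N idx A)) m = layerOut N X W' m := by
    intro m
    induction m with
    | zero => intro _ t A; rfl
    | succ m ih =>
      intro hm t A
      show liftW H N (Wstar + t • pertW H N idx A) m *
        layerOut N X (liftW H N (Wstar + t • pertW H N idx A)) m = W' m * layerOut N X W' m
      rw [hliftne m (by omega) t A, ih (by omega) t A]
  -- claim A : layers above k' change linearly in the perturbation
  have claimA : ∀ m, k' + 1 ≤ m → ∃ P : Matrix (Fin (N m)) (Fin (N (k' + 1))) ℝ,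
      ∀ (t : ℝ) (A : Fin (N (k' + 1)) → Fin (N k') → ℝ),
        layerOut N X (liftW H N (Wstar + t • pertW H N idx A)) m
          = layerOut N X W' m + t • (P * (Matrix.of A * B)) := by
    intro m hm
    induction m, hm using Nat.le_induction with
    | base =>
      refine ⟨1, fun t A => ?_⟩
      show liftW H N (Wstar + t • pertW H N idx A) k' *
          layerOut N X (liftW H N (Wstar + t • pertW H N idx A)) k'
        = W' k' * layerOut N X W' k' + t • ((1 : Matrix _ _ ℝ) * (Matrix.of A * B))
      rw [claim1 k' le_rfl t A, Matrix.one_mul]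
      have hcomp : liftW H N (Wstar + t • pertW H N idx A) k' = W' k' + t • Matrix.of A := by
        simp only [hW', liftW, dif_pos hk'H]
        ext i j
        simp [pertW, hidx, Pi.single_eq_same]
        left; exact congrFun (congrFun (Pi.single_eq_same (M := fun k : Fin (H + 1) => Fin (N ((k : ℕ) + 1)) → Fin (N (k : ℕ)) → ℝ) idx A) i) j
      rw [hcomp, Matrix.add_mul, Matrix.smul_mul, hB]
    | succ m hm ih =>
      obtain ⟨P, hP⟩ := ih
      refine ⟨W' m * P, fun t A => ?_⟩
      show liftW H N (Wstar + t • pertW H N idx A) m *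
          layerOut N X (liftW H N (Wstar + t • pertW H N idx A)) m = _
      rw [hliftne m (by omega) t A, hP t A, Matrix.mul_add, Matrix.mul_smul,
        Matrix.mul_assoc]
      rfl
  -- find where the min width is attained
  obtain ⟨m₀, hm₀mem, hm₀⟩ :=
    Finset.exists_mem_eq_inf' (Finset.nonempty_Icc.mpr hk2) N
  rw [Finset.mem_Icc] at hm₀mem
  obtain ⟨P₀, hP₀⟩ := claimA m₀ hm₀mem.1
  have hdim : N m₀ * n < N (k' + 1) * N k' := by
    rw [hm₀] at hover
    calc N m₀ * n = n * N m₀ := mul_comm _ _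
      _ < N (k' + 1) * N (k' + 1 - 1) := hover
      _ = N (k' + 1) * N k' := rfl
  obtain ⟨V, hV0, hVker⟩ := aux_kernel P₀ B hdim
  -- claim B : with the kernel direction, all layers above m₀ are unchanged
  have claimB : ∀ m, m₀ ≤ m → ∀ t : ℝ,
      layerOut N X (liftW H N (Wstar + t • pertW H N idx V)) m = layerOut N X W' m := by
    intro m hm
    induction m, hm using Nat.le_induction with
    | base =>
      intro t
      rw [hP₀ t V]
      have h0 : P₀ * (Matrix.of V * B) = 0 := hVker
      rw [h0, smul_zero, add_zero]
    | succ m hm ih =>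
      intro t
      show liftW H N (Wstar + t • pertW H N idx V) m *
          layerOut N X (liftW H N (Wstar + t • pertW H N idx V)) m = W' m * layerOut N X W' m
      rw [hliftne m (by omega) t V, ih t]
  -- conclude
  refine ⟨pertW H N idx V, ?_, ?_⟩
  · intro hv
    apply hV0
    have := congrFun hv idx
    exact (Pi.single_eq_same (M := fun k : Fin (H + 1) => Fin (N ((k : ℕ) + 1)) → Fin (N (k : ℕ)) → ℝ) idx V).symm.trans this
  · have hsm : ContDiff ℝ 2 L := by
      have : L = fun W => (1 / 2 : ℝ) * ∑ i, ∑ j,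
          ((layerOut N X (liftW H N W) (H + 1) - Y) i j) ^ 2 := funext hL'
      rw [this]
      exact aux_smooth N X Y
    apply aux_second_deriv L Wstar (pertW H N idx V) hsm
    intro t
    rw [hL' (Wstar + t • pertW H N idx V), hL' Wstar,
      claimB (H + 1) hm₀mem.2 t]
end

section
/- Let $(x_i, y_i)_{i=1}^n$ with $x_i \in \mathbb{R}^d$, $y_i \in \{-1, +1\}$, and suppose $w \in \mathbb{R}^d$, $b \in \mathbb{R}$, $\rho \ge 0$ satisfy the robustness condition: for every $\delta w$ with $\|\delta w\|_2 \le \rho \|w\|_2$ and every $i$, $y_i((w + \delta w)^\top x_i + b) \ge 0$. Then for every $i$, $y_i(w^\top x_i + b) \ge \rho \|w\|_2 \|x_i\|_2$. -/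
open scoped RealInnerProductSpace

/-- If the linear classifier `(w, b)` classifies all data correctly under every
weight perturbation `δ` with `‖δ‖₂ ≤ ρ‖w‖₂`, then every point has margin at
least `ρ‖w‖₂‖xᵢ‖₂`. -/
theorem stmt14 {d n : ℕ} (x : Fin n → EuclideanSpace ℝ (Fin d)) (y : Fin n → ℝ)
    (hy : ∀ i, y i = 1 ∨ y i = -1) (w : EuclideanSpace ℝ (Fin d)) (b ρ : ℝ)
    (hρ : 0 ≤ ρ)
    (hrobust : ∀ δ : EuclideanSpace ℝ (Fin d), ‖δ‖ ≤ ρ * ‖w‖ →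
      ∀ i, 0 ≤ y i * (⟪w + δ, x i⟫ + b)) :
    ∀ i, ρ * ‖w‖ * ‖x i‖ ≤ y i * (⟪w, x i⟫ + b) := by
  intro i
  have hy1 : |y i| = 1 := by rcases hy i with h | h <;> simp [h]
  have hy2 : y i * y i = 1 := by rcases hy i with h | h <;> simp [h]
  by_cases hx : x i = 0
  · have := hrobust 0 (by simp; positivity) i
    simpa [hx] using this
  · have hxn : 0 < ‖x i‖ := norm_pos_iff.mpr hx
    set c := ρ * ‖w‖ / ‖x i‖ with hc
    have hδ : ‖(-(c * y i)) • x i‖ ≤ ρ * ‖w‖ := by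
      rw [norm_smul]
      simp only [norm_neg, norm_mul, Real.norm_eq_abs, hy1, mul_one]
      rw [hc, abs_of_nonneg (by positivity)]
      rw [div_mul_cancel₀ _ (ne_of_gt hxn)]
    have h := hrobust ((-(c * y i)) • x i) hδ i
    rw [inner_add_left, inner_smul_left] at h
    have hxx : ⟪x i, x i⟫ = ‖x i‖ ^ 2 := real_inner_self_eq_norm_sq (x i)
    rw [hxx] at h
    have hcx : c * ‖x i‖ = ρ * ‖w‖ := div_mul_cancel₀ _ (ne_of_gt hxn)
    simp only [starRingEnd_apply, star_trivial] at h
    have hcx2 : c * ‖x i‖ ^ 2 = ρ * ‖w‖ * ‖x i‖ := by rw [sq, ← mul_assoc, hcx]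
    have expand : y i * (⟪w, x i⟫ + -(c * y i) * ‖x i‖ ^ 2 + b)
        = y i * (⟪w, x i⟫ + b) - (y i * y i) * (c * ‖x i‖ ^ 2) := by ring
    rw [expand, hy2, one_mul, hcx2] at h
    linarith
end

section
/- Let $f$ be a continuous $2\pi$-periodic function that is $r$ times continuously differentiable, and let $T$ be a trigonometric polynomial of degree $< n$ with $\|f - T\|_\infty \le \epsilon$. Then $\|f^{(r)} - T^{(r)}\|_\infty \le 3 \cdot 2^r n^r \epsilon + 4 E_n^*(f^{(r)})$, where $E_n^*(g)$ denotes the error of best uniform approximation of $g$ by trigonometric polynomials of degree $< n$. -/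
/-- `T` is a (real) trigonometric polynomial of degree `< n`. -/
def IsTrigPoly (n : ℕ) (T : ℝ → ℝ) : Prop :=
  ∃ a b : Fin n → ℝ, ∀ x, T x =
    ∑ k, (a k * Real.cos ((k : ℕ) * x) + b k * Real.sin ((k : ℕ) * x))

/-- `bestTrigErr n g` is the error of best uniform approximation of `g` by
trigonometric polynomials of degree `< n`. -/
noncomputable def bestTrigErr (n : ℕ) (g : ℝ → ℝ) : ℝ :=
  sInf {e : ℝ | ∃ T, IsTrigPoly n T ∧ ∀ x, |g x - T x| ≤ e}

open Real Finset intervalIntegral MeasureTheory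

noncomputable def tps (m : ℕ) (a b : Fin m → ℝ) : ℝ → ℝ :=
  fun x => ∑ k, (a k * Real.cos ((k : ℕ) * x) + b k * Real.sin ((k : ℕ) * x))

lemma tps_contDiff (m : ℕ) (a b : Fin m → ℝ) {N : WithTop ℕ∞} : ContDiff ℝ N (tps m a b) := by
  apply ContDiff.sum
  intro k _
  exact (contDiff_const.mul (Real.contDiff_cos.comp ((contDiff_const).mul contDiff_id))).add
    (contDiff_const.mul (Real.contDiff_sin.comp ((contDiff_const).mul contDiff_id)))

lemma tps_continuous (m : ℕ) (a b : Fin m → ℝ) : Continuous (tps m a b) :=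
  (tps_contDiff m a b (N := 0)).continuous

lemma tps_hasDerivAt (m : ℕ) (a b : Fin m → ℝ) (x : ℝ) :
    HasDerivAt (tps m a b)
      (tps m (fun k => (k : ℕ) * b k) (fun k => -((k : ℕ) * a k)) x) x := by
  unfold tps
  apply HasDerivAt.fun_sum
  intro k _
  have hk : HasDerivAt (fun x : ℝ => ((k : ℕ) : ℝ) * x) ((k : ℕ) : ℝ) x := by
    simpa using (hasDerivAt_id x).const_mul ((k : ℕ) : ℝ)
  have hc : HasDerivAt (fun x : ℝ => Real.cos ((k : ℕ) * x))
      (-Real.sin ((k : ℕ) * x) * (k : ℕ)) x := (Real.hasDerivAt_cos _).comp x hk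
  have hs : HasDerivAt (fun x : ℝ => Real.sin ((k : ℕ) * x))
      (Real.cos ((k : ℕ) * x) * (k : ℕ)) x := (Real.hasDerivAt_sin _).comp x hk
  have := ((hc.const_mul (a k)).fun_add (hs.const_mul (b k)))
  convert this using 1
  ring

lemma tps_deriv (m : ℕ) (a b : Fin m → ℝ) :
    deriv (tps m a b) = tps m (fun k => (k : ℕ) * b k) (fun k => -((k : ℕ) * a k)) := by
  funext x
  exact (tps_hasDerivAt m a b x).deriv

lemma tps_periodic (m : ℕ) (a b : Fin m → ℝ) : Function.Periodic (tps m a b) (2 * π) := by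
  intro x
  unfold tps
  congr 1
  funext k
  have hc : ((k:ℕ):ℝ) * (x + 2*π) = (k:ℕ) * x + (k:ℤ) * (2*π) := by push_cast; ring
  have hs : Real.sin ((k:ℕ) * (x + 2*π)) = Real.sin ((k:ℕ) * x) := by
    rw [hc, Real.sin_add_int_mul_two_pi]
  have hcc : Real.cos ((k:ℕ) * (x + 2*π)) = Real.cos ((k:ℕ) * x) := by
    rw [hc, Real.cos_add_int_mul_two_pi]
  rw [hs, hcc]

lemma tps_neg (m : ℕ) (a b : Fin m → ℝ) (x : ℝ) :
    tps m (fun k => -a k) (fun k => -b k) x = -tps m a b x := by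
  unfold tps
  rw [← Finset.sum_neg_distrib]
  congr 1; funext k; ring

lemma cexp_add_neg (t : ℝ) :
    Complex.exp ((t:ℂ) * Complex.I) + Complex.exp ((-t:ℝ) * Complex.I) = 2 * (Real.cos t : ℂ) := by
  rw [Complex.exp_mul_I, Complex.exp_mul_I]
  push_cast
  rw [Complex.cos_neg, Complex.sin_neg]
  ring

lemma cexp_sub_neg (t : ℝ) :
    Complex.exp ((t:ℂ) * Complex.I) - Complex.exp ((-t:ℝ) * Complex.I)
      = 2 * (Real.sin t : ℂ) * Complex.I := by
  rw [Complex.exp_mul_I, Complex.exp_mul_I]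
  push_cast
  rw [Complex.cos_neg, Complex.sin_neg]
  ring

open Polynomial in
lemma tps_zeros (N : ℕ) (c d : Fin (N+1) → ℝ) (q : ℕ → ℝ)
    (hmono : StrictMono q)
    (hspread : q (2*N+1) - q 0 < 2*π)
    (hzero : ∀ i, i ≤ 2*N+1 → tps (N+1) c d (q i) = 0) :
    ∀ x, tps (N+1) c d x = 0 := by
  set P : Polynomial ℂ := ∑ k : Fin (N+1),
      (C ((c k : ℂ)/2) * (X^(N+(k:ℕ)) + X^(N-(k:ℕ)))
        + C ((d k : ℂ)/(2*Complex.I)) * (X^(N+(k:ℕ)) - X^(N-(k:ℕ)))) with hPdef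
  have heval : ∀ x : ℝ, P.eval (Complex.exp ((x:ℂ) * Complex.I))
      = Complex.exp (((N:ℝ)*x : ℝ) * Complex.I) * ((tps (N+1) c d x : ℝ) : ℂ) := by
    intro x
    rw [hPdef, eval_finset_sum]
    have htps : ((tps (N+1) c d x : ℝ) : ℂ)
        = ∑ k : Fin (N+1), ((c k : ℂ) * Complex.cos ((((k:ℕ) : ℝ) * x : ℝ) : ℂ)
            + (d k : ℂ) * Complex.sin ((((k:ℕ) : ℝ) * x : ℝ) : ℂ)) := by
      unfold tps
      push_cast
      rfl
    rw [htps, Finset.mul_sum]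
    apply Finset.sum_congr rfl
    intro k _
    have hkN : (k:ℕ) ≤ N := Nat.lt_succ_iff.mp k.isLt
    have hz1 : Complex.exp ((x:ℂ) * Complex.I) ^ (N + (k:ℕ))
        = Complex.exp (((N:ℝ)*x : ℝ) * Complex.I) * Complex.exp ((((k:ℕ):ℝ)*x : ℝ) * Complex.I) := by
      rw [← Complex.exp_nat_mul, ← Complex.exp_add]
      congr 1
      push_cast
      ring
    have hz2 : Complex.exp ((x:ℂ) * Complex.I) ^ (N - (k:ℕ))
        = Complex.exp (((N:ℝ)*x : ℝ) * Complex.I) * Complex.exp ((-(((k:ℕ):ℝ)*x) : ℝ) * Complex.I) := by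
      rw [← Complex.exp_nat_mul, ← Complex.exp_add]
      congr 1
      have : ((N - (k:ℕ) : ℕ) : ℂ) = (N : ℂ) - ((k:ℕ) : ℂ) := Nat.cast_sub hkN
      rw [this]
      push_cast
      ring
    simp only [eval_add, eval_mul, eval_C, eval_pow, eval_X, eval_sub]
    rw [hz1, hz2]
    have h1 : Complex.exp (((N:ℝ)*x:ℝ) * Complex.I) * Complex.exp ((((k:ℕ):ℝ)*x:ℝ) * Complex.I)
        + Complex.exp (((N:ℝ)*x:ℝ) * Complex.I) * Complex.exp ((-(((k:ℕ):ℝ)*x):ℝ) * Complex.I)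
        = Complex.exp (((N:ℝ)*x:ℝ) * Complex.I) * (2 * (Real.cos (((k:ℕ):ℝ)*x) : ℂ)) := by
      rw [← mul_add, cexp_add_neg]
    have h2 : Complex.exp (((N:ℝ)*x:ℝ) * Complex.I) * Complex.exp ((((k:ℕ):ℝ)*x:ℝ) * Complex.I)
        - Complex.exp (((N:ℝ)*x:ℝ) * Complex.I) * Complex.exp ((-(((k:ℕ):ℝ)*x):ℝ) * Complex.I)
        = Complex.exp (((N:ℝ)*x:ℝ) * Complex.I) * (2 * (Real.sin (((k:ℕ):ℝ)*x) : ℂ) * Complex.I) := by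
      rw [← mul_sub, cexp_sub_neg]
    rw [mul_comm ((c k : ℂ)/2) _, mul_comm ((d k : ℂ)/(2*Complex.I)) _]
    rw [h1, h2, Complex.ofReal_cos, Complex.ofReal_sin]
    have hI : Complex.I ≠ 0 := Complex.I_ne_zero
    push_cast
    field_simp
  suffices hP0 : P = 0 by
    intro x
    have h := heval x
    rw [hP0] at h
    simp only [eval_zero] at h
    have := (Complex.exp_ne_zero (((N:ℝ)*x : ℝ) * Complex.I))
    have h2 : ((tps (N+1) c d x : ℝ) : ℂ) = 0 := by
      rcases mul_eq_zero.mp h.symm with h' | h'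
      · exact absurd h' this
      · exact h'
    exact_mod_cast h2
  by_contra hP
  -- degree bound
  have hdeg : P.natDegree ≤ 2*N := by
    apply Polynomial.natDegree_sum_le_of_forall_le
    intro k _
    have hkN : (k:ℕ) ≤ N := Nat.lt_succ_iff.mp k.isLt
    apply (Polynomial.natDegree_add_le _ _).trans
    apply max_le
    · apply (Polynomial.natDegree_C_mul_le _ _).trans
      apply (Polynomial.natDegree_add_le _ _).trans
      apply max_le <;> rw [Polynomial.natDegree_X_pow] <;> omega
    · apply (Polynomial.natDegree_C_mul_le _ _).trans
      apply (Polynomial.natDegree_sub_le _ _).trans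
      apply max_le <;> rw [Polynomial.natDegree_X_pow] <;> omega
  -- distinct roots
  have key : ∀ i j, i ≤ 2*N+1 → j ≤ 2*N+1 → i < j →
      Complex.exp ((q i : ℂ) * Complex.I) ≠ Complex.exp ((q j : ℂ) * Complex.I) := by
    intro i j hi hj hij heq
    rw [Complex.exp_eq_exp_iff_exists_int] at heq
    obtain ⟨m, hm⟩ := heq
    have hm' : ((q i - q j : ℝ) : ℂ) * Complex.I = ((m * (2*π) : ℝ) : ℂ) * Complex.I := by
      push_cast
      push_cast at hm
      linear_combination hm
    have hre : q i - q j = m * (2*π) := by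
      have := mul_right_cancel₀ Complex.I_ne_zero hm'
      exact_mod_cast this
    have hlt : q i < q j := hmono hij
    have hge : q j - q i < 2*π := by
      have h1 : q 0 ≤ q i := hmono.le_iff_le.mpr (Nat.zero_le i)
      have h2 : q j ≤ q (2*N+1) := hmono.le_iff_le.mpr hj
      linarith
    have hπ : (0:ℝ) < 2*π := by positivity
    have hm1 : (m : ℝ) * (2*π) < 0 := by linarith
    have hm2 : -(2*π) < (m : ℝ) * (2*π) := by linarith
    have : (-1 : ℝ) < m := by nlinarith
    have : (m : ℝ) < 0 := by nlinarith
    have h1 : (-1 : ℤ) < m := by exact_mod_cast ‹(-1:ℝ) < m›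
    have h2 : m < 0 := by exact_mod_cast ‹(m:ℝ) < 0›
    omega
  set s : Finset ℂ := (Finset.range (2*N+2)).image (fun i => Complex.exp ((q i : ℂ) * Complex.I)) with hs
  have hcard : s.card = 2*N+2 := by
    rw [hs, Finset.card_image_of_injOn, Finset.card_range]
    intro i hi j hj hij
    simp only [Finset.mem_coe, Finset.mem_range] at hi hj
    rcases lt_trichotomy i j with h | h | h
    · exact absurd hij (key i j (by omega) (by omega) h)
    · exact h
    · exact absurd hij.symm (key j i (by omega) (by omega) h)
  have hsub : s ⊆ P.roots.toFinset := by
    intro z hz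
    rw [hs, Finset.mem_image] at hz
    obtain ⟨i, hi, rfl⟩ := hz
    rw [Multiset.mem_toFinset, Polynomial.mem_roots hP]
    simp only [Finset.mem_range] at hi
    have := heval (q i)
    rw [hzero i (by omega)] at this
    show Polynomial.eval _ P = 0
    rw [this]
    simp
  have : (2*N+2 : ℕ) ≤ 2*N := by
    calc 2*N+2 = s.card := hcard.symm
    _ ≤ P.roots.toFinset.card := Finset.card_le_card hsub
    _ ≤ Multiset.card P.roots := Multiset.toFinset_card_le _
    _ ≤ P.natDegree := Polynomial.card_roots' P
    _ ≤ 2*N := hdeg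
  omega
section BernsteinPart

open Real Finset Filter Topology

lemma exists_pos_left {h : ℝ → ℝ} {D ξ α : ℝ} (hD : HasDerivAt h D ξ) (hDneg : D < 0)
    (hξ : h ξ = 0) (hα : α < ξ) : ∃ u, α < u ∧ u < ξ ∧ 0 < h u := by
  have hs := hasDerivAt_iff_tendsto_slope.mp hD
  have hev0 : ∀ᶠ y in 𝓝[≠] ξ, slope h ξ y < 0 := hs.eventually (eventually_lt_nhds hDneg)
  have hev : ∀ᶠ y in 𝓝[<] ξ, slope h ξ y < 0 :=
    hev0.filter_mono (nhdsWithin_mono ξ (fun y hy => ne_of_lt hy))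
  have hmem : Set.Ioo α ξ ∈ 𝓝[<] ξ := Ioo_mem_nhdsLT hα
  obtain ⟨u, hu1, hu2⟩ := (hev.and (eventually_mem_set.mpr hmem)).exists
  refine ⟨u, hu2.1, hu2.2, ?_⟩
  rw [slope_def_field, hξ, sub_zero] at hu1
  rcases div_neg_iff.mp hu1 with ⟨h1, h2⟩ | ⟨h1, h2⟩
  · exact h1
  · linarith [hu2.2]
lemma exists_neg_right {h : ℝ → ℝ} {D ξ β : ℝ} (hD : HasDerivAt h D ξ) (hDneg : D < 0)
    (hξ : h ξ = 0) (hβ : ξ < β) : ∃ v, ξ < v ∧ v < β ∧ h v < 0 := by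
  have hs := hasDerivAt_iff_tendsto_slope.mp hD
  have hev0 : ∀ᶠ y in 𝓝[≠] ξ, slope h ξ y < 0 := hs.eventually (eventually_lt_nhds hDneg)
  have hev : ∀ᶠ y in 𝓝[>] ξ, slope h ξ y < 0 :=
    hev0.filter_mono (nhdsWithin_mono ξ (fun y hy => ne_of_gt hy))
  have hmem : Set.Ioo ξ β ∈ 𝓝[>] ξ := Ioo_mem_nhdsGT hβ
  obtain ⟨v, hv1, hv2⟩ := (hev.and (eventually_mem_set.mpr hmem)).exists
  refine ⟨v, hv2.1, hv2.2, ?_⟩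
  rw [slope_def_field, hξ, sub_zero] at hv1
  rcases div_neg_iff.mp hv1 with ⟨h1, h2⟩ | ⟨h1, h2⟩
  · linarith [hv2.1]
  · exact h1

lemma bernstein_core (N : ℕ) (hN : 1 ≤ N) (a b : Fin (N+1) → ℝ) (M ξ : ℝ)
    (hb : ∀ x, |tps (N+1) a b x| < M)
    (hd : (N:ℝ) * M < tps (N+1) (fun k => ((k:ℕ):ℝ) * b k) (fun k => -(((k:ℕ):ℝ) * a k)) ξ) :
    False := by
  have hNR : (0:ℝ) < N := by exact_mod_cast hN
  set W := tps (N+1) a b with hW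
  set W' := tps (N+1) (fun k => ((k:ℕ):ℝ) * b k) (fun k => -(((k:ℕ):ℝ) * a k)) with hW'
  have hM : 0 < M := lt_of_le_of_lt (abs_nonneg _) (hb ξ)
  have habs : -1 < W ξ / M ∧ W ξ / M < 1 := by
    constructor
    · rw [lt_div_iff₀ hM]; have := (abs_lt.mp (hb ξ)).1; linarith
    · rw [div_lt_one hM]; exact (abs_lt.mp (hb ξ)).2
  set θ := Real.arcsin (W ξ / M) with hθ
  have hθ1 : -(π/2) < θ := Real.neg_pi_div_two_lt_arcsin.mpr habs.1
  have hθ2 : θ < π/2 := Real.arcsin_lt_pi_div_two.mpr habs.2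
  have hsinθ : Real.sin θ = W ξ / M := Real.sin_arcsin (le_of_lt habs.1) (le_of_lt habs.2)
  -- the comparison function
  set H : ℝ → ℝ := fun x => M * Real.sin ((N:ℝ)*(x - ξ) + θ) - W x with hH
  set c : Fin (N+1) → ℝ :=
    fun k => (if (k:ℕ) = N then M * Real.sin (θ - N*ξ) else 0) - a k with hc
  set d : Fin (N+1) → ℝ :=
    fun k => (if (k:ℕ) = N then M * Real.cos (θ - N*ξ) else 0) - b k with hd'
  have hfun : ∀ x, tps (N+1) c d x = H x := by
    intro x
    unfold tps
    rw [hH]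
    have hsplit : ∀ k : Fin (N+1), c k * Real.cos ((k:ℕ) * x) + d k * Real.sin ((k:ℕ)*x)
        = ((if (k:ℕ) = N then M * Real.sin (θ - N*ξ) else 0) * Real.cos ((k:ℕ)*x)
           + (if (k:ℕ) = N then M * Real.cos (θ - N*ξ) else 0) * Real.sin ((k:ℕ)*x))
          - (a k * Real.cos ((k:ℕ) * x) + b k * Real.sin ((k:ℕ)*x)) := by
      intro k; rw [hc, hd']; ring
    rw [Finset.sum_congr rfl (fun k _ => hsplit k), Finset.sum_sub_distrib]
    have hsingle : ∑ k : Fin (N+1), ((if (k:ℕ) = N then M * Real.sin (θ - N*ξ) else 0) * Real.cos ((k:ℕ)*x)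
           + (if (k:ℕ) = N then M * Real.cos (θ - N*ξ) else 0) * Real.sin ((k:ℕ)*x))
        = M * Real.sin ((N:ℝ)*(x - ξ) + θ) := by
      rw [Finset.sum_eq_single (⟨N, Nat.lt_succ_self N⟩ : Fin (N+1))]
      · simp only [Fin.val_mk, if_true]
        have : (N:ℝ)*(x-ξ) + θ = (N:ℝ)*x + (θ - N*ξ) := by ring
        rw [this, Real.sin_add]
        ring
      · intro k _ hk
        have : (k:ℕ) ≠ N := by
          intro hkk
          apply hk
          apply Fin.ext
          exact hkk
        rw [if_neg this, if_neg this]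
        ring
      · intro hmem
        exact absurd (Finset.mem_univ _) hmem
    rw [hsingle]
    rfl
  have hξ0 : H ξ = 0 := by
    simp only [hH]
    simp only [sub_self, mul_zero, zero_add]
    rw [hsinθ]
    field_simp
    ring
  -- derivative of H at ξ
  have hφd : HasDerivAt (fun x => M * Real.sin ((N:ℝ)*(x - ξ) + θ))
      (M * (Real.cos ((N:ℝ)*(ξ - ξ) + θ) * N)) ξ := by
    have hlin : HasDerivAt (fun x : ℝ => (N:ℝ)*(x - ξ) + θ) (N:ℝ) ξ := by
      simpa using (((hasDerivAt_id ξ).sub_const ξ).const_mul (N:ℝ)).add_const θ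
    exact ((Real.hasDerivAt_sin _).comp ξ hlin).const_mul M
  have hWd : HasDerivAt W (W' ξ) ξ := by
    have := tps_hasDerivAt (N+1) a b ξ
    exact this
  set D : ℝ := M * (Real.cos ((N:ℝ)*(ξ - ξ) + θ) * N) - W' ξ with hD
  have hHd : HasDerivAt H D ξ := hφd.sub hWd
  have hDneg : D < 0 := by
    rw [hD]
    have h1 : Real.cos ((N:ℝ)*(ξ - ξ) + θ) ≤ 1 := Real.cos_le_one _
    have h2 : M * (Real.cos ((N:ℝ)*(ξ - ξ) + θ) * N) ≤ M * N := by
      have : Real.cos ((N:ℝ)*(ξ - ξ) + θ) * N ≤ 1 * N := by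
        apply mul_le_mul_of_nonneg_right h1 (le_of_lt hNR)
      nlinarith
    nlinarith
  -- the grid
  set t : ℕ → ℝ := fun j => ξ + ((j:ℝ)*π - π/2 - θ)/N with ht
  have htmono : StrictMono t := by
    intro i j hij
    rw [ht]
    have hij' : (i:ℝ) < (j:ℝ) := by exact_mod_cast hij
    have hπ : (0:ℝ) < π := Real.pi_pos
    have h1 : (i:ℝ)*π - π/2 - θ < (j:ℝ)*π - π/2 - θ := by nlinarith
    have := (div_lt_div_iff_of_pos_right hNR).mpr h1
    linarith
  have hcosj : ∀ j : ℕ, Real.cos ((j:ℝ)*π) = (-1)^j := by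
    intro j
    induction j with
    | zero => simp
    | succ j ih =>
      have hjj : ((j+1:ℕ):ℝ)*π = (j:ℝ)*π + π := by push_cast; ring
      rw [hjj, Real.cos_add_pi, ih]
      ring
  have hHt : ∀ j : ℕ, H (t j) = -(M * (-1)^j) - W (t j) := by
    intro j
    simp only [hH]
    have harg : (N:ℝ)*(t j - ξ) + θ = (j:ℝ)*π - π/2 := by
      rw [ht]
      field_simp
      ring
    rw [harg, Real.sin_sub_pi_div_two, hcosj j]
    ring
  have hsign_even : ∀ j : ℕ, Even j → H (t j) < 0 := by
    intro j hj
    rw [hHt j, hj.neg_one_pow]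
    have := (abs_lt.mp (hb (t j))).1
    simp only [mul_one]
    linarith
  have hsign_odd : ∀ j : ℕ, Odd j → 0 < H (t j) := by
    intro j hj
    rw [hHt j, hj.neg_one_pow]
    have := (abs_lt.mp (hb (t j))).2
    simp only [mul_neg_one, neg_neg]
    linarith
  -- every interval (t j, t (j+1)) contains a zero
  have hcontH : Continuous H := by
    rw [hH]
    apply Continuous.sub
    · exact continuous_const.mul (Real.continuous_sin.comp
        (((continuous_const.mul (continuous_id.sub continuous_const)).add continuous_const)))
    · exact tps_continuous _ _ _
  have hzoo : ∀ j : ℕ, ∃ z, z ∈ Set.Ioo (t j) (t (j+1)) ∧ H z = 0 := by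
    intro j
    rcases Nat.even_or_odd j with hj | hj
    · have h1 : H (t j) < 0 := hsign_even j hj
      have h2 : 0 < H (t (j+1)) := hsign_odd (j+1) (Even.add_one hj)
      have := intermediate_value_Ioo (le_of_lt (htmono (Nat.lt_succ_self j))) hcontH.continuousOn
        (Set.mem_Ioo.mpr ⟨h1, h2⟩)
      obtain ⟨z, hz1, hz2⟩ := this
      exact ⟨z, hz1, hz2⟩
    · have h1 : 0 < H (t j) := hsign_odd j hj
      have h2 : H (t (j+1)) < 0 := hsign_even (j+1) (Odd.add_one hj)
      have := intermediate_value_Ioo' (le_of_lt (htmono (Nat.lt_succ_self j))) hcontH.continuousOn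
        (Set.mem_Ioo.mpr ⟨h2, h1⟩)
      obtain ⟨z, hz1, hz2⟩ := this
      exact ⟨z, hz1, hz2⟩
  set Z : ℕ → ℝ := fun j => Classical.choose (hzoo j) with hZ
  have hZspec : ∀ j, Z j ∈ Set.Ioo (t j) (t (j+1)) ∧ H (Z j) = 0 :=
    fun j => Classical.choose_spec (hzoo j)
  -- points around ξ
  have hξmem : t 0 < ξ ∧ ξ < t 1 := by
    constructor
    · rw [ht]
      have : ((0:ℕ):ℝ)*π - π/2 - θ < 0 := by push_cast; linarith
      have := div_neg_of_neg_of_pos this hNR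
      linarith
    · rw [ht]
      have : (0:ℝ) < ((1:ℕ):ℝ)*π - π/2 - θ := by push_cast; linarith
      have := div_pos this hNR
      linarith
  obtain ⟨u, hu1, hu2, hu3⟩ := exists_pos_left hHd hDneg hξ0 hξmem.1
  obtain ⟨v, hv1, hv2, hv3⟩ := exists_neg_right hHd hDneg hξ0 hξmem.2
  obtain ⟨z1, hz11, hz12⟩ := intermediate_value_Ioo (le_of_lt hu1)
    hcontH.continuousOn (Set.mem_Ioo.mpr ⟨hsign_even 0 (Even.zero), hu3⟩)
  obtain ⟨z3, hz31, hz32⟩ := intermediate_value_Ioo (le_of_lt hv2) hcontH.continuousOn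
    (Set.mem_Ioo.mpr ⟨hv3, hsign_odd 1 odd_one⟩)
  -- assemble the zeros
  set q : ℕ → ℝ := fun i => match i with
    | 0 => z1 | 1 => ξ | 2 => z3 | (j+3) => Z (j+1) with hq
  have hqmono : StrictMono q := by
    apply strictMono_nat_of_lt_succ
    intro i
    match i with
    | 0 =>
      show z1 < ξ
      exact lt_trans hz11.2 hu2
    | 1 =>
      show ξ < z3
      exact lt_trans hv1 hz31.1
    | 2 =>
      show z3 < Z 1
      exact lt_trans hz31.2 (hZspec 1).1.1
    | (j+3) =>
      show Z (j+1) < Z (j+2)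
      exact lt_trans (hZspec (j+1)).1.2 (hZspec (j+2)).1.1
  have hspread : q (2*N+1) - q 0 < 2*π := by
    have hq0 : t 0 < q 0 := hz11.1
    have hqtop : q (2*N+1) < t (2*N) := by
      have h1 : 2*N+1 = (2*N-2)+3 := by omega
      have h2 : q (2*N+1) = Z (2*N-2+1) := by rw [h1]
      rw [h2]
      have h3 : (2*N-2+1)+1 = 2*N := by omega
      have := (hZspec (2*N-2+1)).1.2
      rwa [h3] at this
    have htt : t (2*N) - t 0 = 2*π := by
      rw [ht]
      push_cast
      field_simp
      ring
    linarith
  have hzeros : ∀ i, i ≤ 2*N+1 → tps (N+1) c d (q i) = 0 := by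
    intro i _
    rw [hfun]
    match i with
    | 0 => exact hz12
    | 1 => exact hξ0
    | 2 => exact hz32
    | (j+3) => exact (hZspec (j+1)).2
  have hallzero := tps_zeros N c d q hqmono hspread hzeros
  have hH0 : H = fun _ => (0:ℝ) := by
    funext x
    rw [← hfun x, hallzero x]
  rw [hH0] at hHd
  have : D = 0 := hHd.unique (hasDerivAt_const ξ 0)
  linarith

end BernsteinPart
section BernsteinWrap
open Real Finset

lemma tps_deriv_bound (m : ℕ) (hm : 1 ≤ m) (a b : Fin m → ℝ) (M : ℝ)
    (hb : ∀ x, |tps m a b x| ≤ M) :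
    ∀ x, |tps m (fun k => ((k:ℕ):ℝ) * b k) (fun k => -(((k:ℕ):ℝ) * a k)) x|
      ≤ ((m-1 : ℕ) : ℝ) * M := by
  obtain ⟨N, rfl⟩ : ∃ N, m = N + 1 := ⟨m-1, by omega⟩
  have hsimp : (N+1-1 : ℕ) = N := rfl
  rw [hsimp]
  intro x
  have hM : 0 ≤ M := le_trans (abs_nonneg _) (hb 0)
  rcases Nat.eq_zero_or_pos N with h0 | hpos
  · subst h0
    have hz : tps 1 (fun k => ((k:ℕ):ℝ) * b k) (fun k => -(((k:ℕ):ℝ) * a k)) x = 0 := by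
      unfold tps
      rw [Fin.sum_univ_one]
      norm_num
    rw [hz]
    simp
  · by_contra hcon
    push_neg at hcon
    set V := tps (N+1) (fun k => ((k:ℕ):ℝ) * b k) (fun k => -(((k:ℕ):ℝ) * a k)) with hV
    set M'' : ℝ := (M + |V x| / N) / 2 with hM''
    have hNR : (0:ℝ) < N := by exact_mod_cast hpos
    have h1 : (N:ℝ) * M < |V x| := hcon
    have h2 : M < M'' := by
      rw [hM'']
      have : M < |V x| / N := by rw [lt_div_iff₀ hNR]; linarith [h1]
      linarith
    have h3 : (N:ℝ) * M'' < |V x| := by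
      rw [hM'']
      have : M < |V x| / N := by rw [lt_div_iff₀ hNR]; linarith [h1]
      have h4 : M'' < |V x| / N := by rw [hM'']; linarith
      calc (N:ℝ) * M'' < (N:ℝ) * (|V x| / N) := by
            apply mul_lt_mul_of_pos_left _ hNR
            rw [hM'']; linarith
        _ = |V x| := by field_simp
    have hstrict : ∀ y, |tps (N+1) a b y| < M'' := fun y => lt_of_le_of_lt (hb y) h2
    rcases abs_cases (V x) with ⟨he, _⟩ | ⟨he, _⟩
    · exact bernstein_core N hpos a b M'' x hstrict (by rw [he] at h3; rwa [hV] at h3)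
    · have hstrict' : ∀ y, |tps (N+1) (fun k => -a k) (fun k => -b k) y| < M'' := by
        intro y
        rw [tps_neg, abs_neg]
        exact hstrict y
      apply bernstein_core N hpos (fun k => -a k) (fun k => -b k) M'' x hstrict'
      have heq : tps (N+1) (fun k => ((k:ℕ):ℝ) * (fun k => -b k) k)
          (fun k => -(((k:ℕ):ℝ) * (fun k => -a k) k)) x = - V x := by
        rw [hV, ← tps_neg]
        congr 1 <;> funext k <;> ring
      rw [heq]
      rw [he] at h3
      exact h3
lemma tps_iter_bound (m : ℕ) (hm : 1 ≤ m) (r : ℕ) :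
    ∀ (a b : Fin m → ℝ) (M : ℝ), (∀ x, |tps m a b x| ≤ M) →
    ∀ x, |iteratedDeriv r (tps m a b) x| ≤ ((m-1:ℕ):ℝ)^r * M := by
  induction r with
  | zero =>
    intro a b M hb x
    simpa using hb x
  | succ r ih =>
    intro a b M hb x
    rw [iteratedDeriv_succ', tps_deriv]
    have hb' : ∀ y, |tps m (fun k => ((k:ℕ):ℝ) * b k) (fun k => -(((k:ℕ):ℝ) * a k)) y|
        ≤ ((m-1:ℕ):ℝ) * M := tps_deriv_bound m hm a b M hb
    have := ih _ _ _ hb' x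
    calc |iteratedDeriv r (tps m (fun k => ((k:ℕ):ℝ) * b k) (fun k => -(((k:ℕ):ℝ) * a k))) x|
        ≤ ((m-1:ℕ):ℝ)^r * (((m-1:ℕ):ℝ) * M) := this
      _ = ((m-1:ℕ):ℝ)^(r+1) * M := by ring
end BernsteinWrap
section FejerPart
open Real Finset intervalIntegral MeasureTheory

lemma integral_cos_intc (c : ℤ) :
    ∫ t in (0:ℝ)..(2*π), Real.cos ((c:ℝ)*t) = if c = 0 then 2*π else 0 := by
  rcases eq_or_ne c 0 with h | h
  · subst h
    simp
  · rw [if_neg h]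
    have hc : ((c:ℝ)) ≠ 0 := Int.cast_ne_zero.mpr h
    rw [intervalIntegral.integral_comp_mul_left Real.cos hc]
    rw [integral_cos]
    have h1 : Real.sin ((c:ℝ) * (2*π)) = 0 := by
      have : (c:ℝ) * (2*π) = ((2*c : ℤ):ℝ) * π := by push_cast; ring
      rw [this, Real.sin_int_mul_pi]
    have h2 : Real.sin ((c:ℝ) * 0) = 0 := by norm_num
    rw [h1, h2]
    simp

lemma integral_sin_intc (c : ℤ) :
    ∫ t in (0:ℝ)..(2*π), Real.sin ((c:ℝ)*t) = 0 := by
  rcases eq_or_ne c 0 with h | h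
  · subst h
    simp
  · have hc : ((c:ℝ)) ≠ 0 := Int.cast_ne_zero.mpr h
    rw [intervalIntegral.integral_comp_mul_left Real.sin hc]
    rw [integral_sin]
    have h1 : Real.cos ((c:ℝ) * (2*π)) = 1 := by
      have : (c:ℝ) * (2*π) = 0 + ((c : ℤ):ℝ) * (2*π) := by push_cast; ring
      rw [this, Real.cos_add_int_mul_two_pi, Real.cos_zero]
    have h2 : Real.cos ((c:ℝ) * 0) = 1 := by norm_num
    rw [h1, h2]
    simp

lemma integral_cos_nat (k : ℕ) :
    ∫ t in (0:ℝ)..(2*π), Real.cos ((k:ℝ)*t) = if k = 0 then 2*π else 0 := by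
  have := integral_cos_intc (k : ℤ)
  push_cast at this
  rw [this]
  simp

lemma orth_cc (a b : ℕ) :
    ∫ t in (0:ℝ)..(2*π), Real.cos ((a:ℝ)*t) * Real.cos ((b:ℝ)*t)
      = if a = b then (if a = 0 then 2*π else π) else 0 := by
  have hpt : ∀ t : ℝ, Real.cos ((a:ℝ)*t) * Real.cos ((b:ℝ)*t)
      = (Real.cos ((((a:ℤ)-(b:ℤ) : ℤ):ℝ)*t) + Real.cos ((((a:ℤ)+(b:ℤ) : ℤ):ℝ)*t))/2 := by
    intro t
    have h1 : ((((a:ℤ)-(b:ℤ) : ℤ):ℝ))*t = (a:ℝ)*t - (b:ℝ)*t := by push_cast; ring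
    have h2 : ((((a:ℤ)+(b:ℤ) : ℤ):ℝ))*t = (a:ℝ)*t + (b:ℝ)*t := by push_cast; ring
    rw [h1, h2, Real.cos_sub, Real.cos_add]
    ring
  rw [intervalIntegral.integral_congr (g := fun t => (Real.cos ((((a:ℤ)-(b:ℤ) : ℤ):ℝ)*t) + Real.cos ((((a:ℤ)+(b:ℤ) : ℤ):ℝ)*t))/2) (fun t _ => hpt t)]
  have hint : ∀ c : ℤ, IntervalIntegrable (fun t => Real.cos ((c:ℝ)*t)) volume 0 (2*π) :=
    fun c => (Real.continuous_cos.comp (continuous_const.mul continuous_id)).intervalIntegrable 0 (2*π)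
  rw [intervalIntegral.integral_div, intervalIntegral.integral_add (hint _) (hint _),
    integral_cos_intc, integral_cos_intc]
  rcases eq_or_ne a b with hab | hab
  · subst hab
    rcases eq_or_ne a 0 with h0 | h0
    · subst h0; norm_num
    · rw [if_pos rfl, if_neg h0, if_pos (by omega), if_neg (by omega)]
      ring
  · rw [if_neg hab, if_neg (by omega), if_neg (by omega)]
    norm_num

lemma orth_sc (a b : ℕ) :
    ∫ t in (0:ℝ)..(2*π), Real.sin ((a:ℝ)*t) * Real.cos ((b:ℝ)*t) = 0 := by
  have hpt : ∀ t : ℝ, Real.sin ((a:ℝ)*t) * Real.cos ((b:ℝ)*t)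
      = (Real.sin ((((a:ℤ)+(b:ℤ) : ℤ):ℝ)*t) + Real.sin ((((a:ℤ)-(b:ℤ) : ℤ):ℝ)*t))/2 := by
    intro t
    have h1 : ((((a:ℤ)-(b:ℤ) : ℤ):ℝ))*t = (a:ℝ)*t - (b:ℝ)*t := by push_cast; ring
    have h2 : ((((a:ℤ)+(b:ℤ) : ℤ):ℝ))*t = (a:ℝ)*t + (b:ℝ)*t := by push_cast; ring
    rw [h1, h2, Real.sin_sub, Real.sin_add]
    ring
  rw [intervalIntegral.integral_congr (g := fun t => (Real.sin ((((a:ℤ)+(b:ℤ) : ℤ):ℝ)*t) + Real.sin ((((a:ℤ)-(b:ℤ) : ℤ):ℝ)*t))/2) (fun t _ => hpt t)]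
  have hint : ∀ c : ℤ, IntervalIntegrable (fun t => Real.sin ((c:ℝ)*t)) volume 0 (2*π) :=
    fun c => (Real.continuous_sin.comp (continuous_const.mul continuous_id)).intervalIntegrable 0 (2*π)
  rw [intervalIntegral.integral_div, intervalIntegral.integral_add (hint _) (hint _),
    integral_sin_intc, integral_sin_intc]
  norm_num

lemma orth_ss (a b : ℕ) :
    ∫ t in (0:ℝ)..(2*π), Real.sin ((a:ℝ)*t) * Real.sin ((b:ℝ)*t)
      = if a = b then (if a = 0 then 0 else π) else 0 := by
  have hpt : ∀ t : ℝ, Real.sin ((a:ℝ)*t) * Real.sin ((b:ℝ)*t)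
      = (Real.cos ((((a:ℤ)-(b:ℤ) : ℤ):ℝ)*t) - Real.cos ((((a:ℤ)+(b:ℤ) : ℤ):ℝ)*t))/2 := by
    intro t
    have h1 : ((((a:ℤ)-(b:ℤ) : ℤ):ℝ))*t = (a:ℝ)*t - (b:ℝ)*t := by push_cast; ring
    have h2 : ((((a:ℤ)+(b:ℤ) : ℤ):ℝ))*t = (a:ℝ)*t + (b:ℝ)*t := by push_cast; ring
    rw [h1, h2, Real.cos_sub, Real.cos_add]
    ring
  rw [intervalIntegral.integral_congr (g := fun t => (Real.cos ((((a:ℤ)-(b:ℤ) : ℤ):ℝ)*t) - Real.cos ((((a:ℤ)+(b:ℤ) : ℤ):ℝ)*t))/2) (fun t _ => hpt t)]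
  have hint : ∀ c : ℤ, IntervalIntegrable (fun t => Real.cos ((c:ℝ)*t)) volume 0 (2*π) :=
    fun c => (Real.continuous_cos.comp (continuous_const.mul continuous_id)).intervalIntegrable 0 (2*π)
  rw [intervalIntegral.integral_div, intervalIntegral.integral_sub (hint _) (hint _),
    integral_cos_intc, integral_cos_intc]
  rcases eq_or_ne a b with hab | hab
  · subst hab
    rcases eq_or_ne a 0 with h0 | h0
    · subst h0; norm_num
    · rw [if_pos rfl, if_neg h0, if_pos (by omega), if_neg (by omega)]
      ring
  · rw [if_neg hab, if_neg (by omega), if_neg (by omega)]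
    norm_num

lemma contCos (c : ℝ) : Continuous fun t : ℝ => Real.cos (c*t) := by fun_prop
lemma contSin (c : ℝ) : Continuous fun t : ℝ => Real.sin (c*t) := by fun_prop

noncomputable def Fej (m : ℕ) : ℝ → ℝ := fun u =>
  (1/(m:ℝ)) * ∑ j ∈ Finset.range m, ∑ l ∈ Finset.range m,
    Real.cos (((((j:ℤ)-(l:ℤ)).natAbs : ℕ) : ℝ) * u)

lemma natAbs_cos (j l : ℕ) (u : ℝ) :
    Real.cos (((((j:ℤ)-(l:ℤ)).natAbs : ℕ) : ℝ) * u) = Real.cos (((j:ℝ)-(l:ℝ)) * u) := by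
  rcases le_total l j with h | h
  · have h2 : (((j:ℤ)-(l:ℤ)).natAbs) = j - l := by omega
    rw [h2, Nat.cast_sub h]
  · have h2 : (((j:ℤ)-(l:ℤ)).natAbs) = l - j := by omega
    rw [h2, Nat.cast_sub h]
    rw [show ((l:ℝ) - j) * u = -(((j:ℝ)-l)*u) by ring, Real.cos_neg]

lemma Fej_nonneg (m : ℕ) (u : ℝ) : 0 ≤ Fej m u := by
  unfold Fej
  apply mul_nonneg (by positivity)
  have hkey : ∑ j ∈ Finset.range m, ∑ l ∈ Finset.range m,
      Real.cos (((((j:ℤ)-(l:ℤ)).natAbs : ℕ) : ℝ) * u)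
      = Complex.normSq (∑ j ∈ Finset.range m, Complex.exp (((j:ℝ)*u : ℝ) * Complex.I)) := by
    set D := ∑ j ∈ Finset.range m, Complex.exp (((j:ℝ)*u : ℝ) * Complex.I) with hD
    have h1 : Complex.normSq D = (D * (starRingEnd ℂ) D).re := by
      rw [Complex.mul_conj, Complex.ofReal_re]
    rw [h1, hD, map_sum, Finset.sum_mul_sum]
    rw [Complex.re_sum]
    apply Finset.sum_congr rfl
    intro j _
    rw [Complex.re_sum]
    apply Finset.sum_congr rfl
    intro l _
    rw [← Complex.exp_conj]
    have hconj : (starRingEnd ℂ) ((((l:ℝ)*u : ℝ)) * Complex.I) = -((((l:ℝ)*u : ℝ)) * Complex.I) := by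
      simp [Complex.conj_ofReal]
    rw [hconj, ← Complex.exp_add]
    have harg : ((((j:ℝ)*u : ℝ)) : ℂ) * Complex.I + -(((((l:ℝ)*u : ℝ)) : ℂ) * Complex.I)
        = ((((j:ℝ)-(l:ℝ))*u : ℝ) : ℂ) * Complex.I := by
      push_cast
      ring
    rw [harg, Complex.exp_ofReal_mul_I_re, natAbs_cos]
  rw [hkey]
  exact Complex.normSq_nonneg _

lemma Fej_periodic (m : ℕ) : Function.Periodic (Fej m) (2*π) := by
  intro u
  unfold Fej
  congr 1
  apply Finset.sum_congr rfl
  intro j _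
  apply Finset.sum_congr rfl
  intro l _
  set k : ℕ := ((j:ℤ)-(l:ℤ)).natAbs
  have : (k:ℝ) * (u + 2*π) = (k:ℝ)*u + ((k:ℤ):ℝ)*(2*π) := by push_cast; ring
  rw [this, Real.cos_add_int_mul_two_pi]

lemma Fej_continuous (m : ℕ) : Continuous (Fej m) := by
  unfold Fej
  apply Continuous.mul continuous_const
  apply continuous_finset_sum
  intro j _
  apply continuous_finset_sum
  intro l _
  exact Real.continuous_cos.comp (continuous_const.mul continuous_id)

lemma Fej_integral (m : ℕ) (hm : 1 ≤ m) : ∫ t in (0:ℝ)..(2*π), Fej m t = 2*π := by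
  unfold Fej
  rw [intervalIntegral.integral_const_mul]
  have hint : ∀ k : ℕ, IntervalIntegrable (fun t => Real.cos ((k:ℝ)*t)) volume 0 (2*π) :=
    fun k => (Real.continuous_cos.comp (continuous_const.mul continuous_id)).intervalIntegrable 0 (2*π)
  rw [intervalIntegral.integral_finset_sum
    (f := fun (j : ℕ) (t : ℝ) => ∑ l ∈ Finset.range m,
      Real.cos (((((j:ℤ)-(l:ℤ)).natAbs : ℕ) : ℝ) * t))
    (fun j _ => (continuous_finset_sum _ (fun l _ => contCos _)).intervalIntegrable 0 (2*π))]
  have hinner : ∀ j ∈ Finset.range m, (∫ t in (0:ℝ)..(2*π),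
      ∑ l ∈ Finset.range m, Real.cos (((((j:ℤ)-(l:ℤ)).natAbs : ℕ) : ℝ) * t)) = 2*π := by
    intro j hj
    rw [intervalIntegral.integral_finset_sum (fun l _ => hint _)]
    have hterm : ∀ l ∈ Finset.range m, (∫ t in (0:ℝ)..(2*π),
        Real.cos (((((j:ℤ)-(l:ℤ)).natAbs : ℕ) : ℝ) * t)) = if j = l then 2*π else 0 := by
      intro l _
      rw [integral_cos_nat]
      congr 1
      simp only [eq_iff_iff]
      omega
    rw [Finset.sum_congr rfl hterm, Finset.sum_ite_eq (Finset.range m) j (fun _ => 2*π), if_pos hj]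
  rw [Finset.sum_congr rfl hinner, Finset.sum_const, Finset.card_range]
  have hm' : (m:ℝ) ≠ 0 := Nat.cast_ne_zero.mpr (by omega)
  field_simp
  rw [nsmul_eq_mul]; ring
end FejerPart
section VopPart
open Real Finset intervalIntegral MeasureTheory

noncomputable def Vker (n : ℕ) : ℝ → ℝ := fun u => 2 * Fej (2*n) u - Fej n u

lemma Vker_continuous (n : ℕ) : Continuous (Vker n) :=
  (continuous_const.mul (Fej_continuous (2*n))).sub (Fej_continuous n)

lemma Vker_periodic (n : ℕ) : Function.Periodic (Vker n) (2*π) := by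
  intro u
  unfold Vker
  rw [Fej_periodic, Fej_periodic]

lemma Vker_abs_integral (n : ℕ) (hn : 1 ≤ n) :
    ∫ t in (0:ℝ)..(2*π), |Vker n t| ≤ 6*π := by
  have h1 : ∫ t in (0:ℝ)..(2*π), |Vker n t|
      ≤ ∫ t in (0:ℝ)..(2*π), (2 * Fej (2*n) t + Fej n t) := by
    apply intervalIntegral.integral_mono_on (by positivity)
      ((Vker_continuous n).abs.intervalIntegrable 0 (2*π))
      (((continuous_const.fun_mul (Fej_continuous (2*n))).fun_add (Fej_continuous n)).intervalIntegrable 0 (2*π))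
    intro t _
    have h2 := Fej_nonneg (2*n) t
    have h3 := Fej_nonneg n t
    rw [abs_le]
    unfold Vker
    constructor <;> linarith
  have h4 : ∫ t in (0:ℝ)..(2*π), (2 * Fej (2*n) t + Fej n t) = 6*π := by
    rw [intervalIntegral.integral_add ((continuous_const.fun_mul (Fej_continuous (2*n))).intervalIntegrable 0 (2*π)) ((Fej_continuous n).intervalIntegrable 0 (2*π)),
      intervalIntegral.integral_const_mul, Fej_integral (2*n) (by omega), Fej_integral n hn]
    ring
  linarith

noncomputable def Vop (n : ℕ) (h : ℝ → ℝ) : ℝ → ℝ := fun x =>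
  (1/(2*π)) * ∫ t in (0:ℝ)..(2*π), h t * Vker n (x - t)

lemma Vop_bound (n : ℕ) (hn : 1 ≤ n) (h : ℝ → ℝ) (hc : Continuous h) (B : ℝ)
    (hB : ∀ t, |h t| ≤ B) (x : ℝ) : |Vop n h x| ≤ 3*B := by
  have hπ : (0:ℝ) < π := Real.pi_pos
  have hK : Continuous fun t => Vker n (x - t) :=
    (Vker_continuous n).comp (continuous_const.sub continuous_id)
  have hB0 : 0 ≤ B := le_trans (abs_nonneg _) (hB 0)
  have habs : |∫ t in (0:ℝ)..(2*π), h t * Vker n (x - t)|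
      ≤ ∫ t in (0:ℝ)..(2*π), B * |Vker n (x-t)| := by
    apply le_trans (intervalIntegral.abs_integral_le_integral_abs (by positivity))
    apply intervalIntegral.integral_mono_on (by positivity)
      ((hc.fun_mul hK).abs.intervalIntegrable _ _) ((continuous_const.fun_mul hK.abs).intervalIntegrable _ _)
    intro t _
    rw [abs_mul]
    exact mul_le_mul_of_nonneg_right (hB t) (abs_nonneg _)
  have hshift : ∫ t in (0:ℝ)..(2*π), |Vker n (x - t)| = ∫ u in (0:ℝ)..(2*π), |Vker n u| := by
    rw [intervalIntegral.integral_comp_sub_left (fun u => |Vker n u|) x]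
    have hper : Function.Periodic (fun u => |Vker n u|) (2*π) := fun u => by
      show |Vker n (u + 2*π)| = |Vker n u|
      rw [Vker_periodic n u]
    have h5 := hper.intervalIntegral_add_eq (x - 2*π) 0
    rw [show x - 2*π + 2*π = x by ring, show (0:ℝ) + 2*π = 2*π by ring] at h5
    rw [show x - 0 = x by ring]
    exact h5
  have h6 : ∫ t in (0:ℝ)..(2*π), B * |Vker n (x-t)| = B * ∫ t in (0:ℝ)..(2*π), |Vker n (x-t)| :=
    intervalIntegral.integral_const_mul B _
  have h7 : ∫ t in (0:ℝ)..(2*π), B * |Vker n (x-t)| ≤ B * (6*π) := by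
    rw [h6, hshift]
    exact mul_le_mul_of_nonneg_left (Vker_abs_integral n hn) hB0
  have h8 : |Vop n h x| = (1/(2*π)) * |∫ t in (0:ℝ)..(2*π), h t * Vker n (x - t)| := by
    unfold Vop
    rw [abs_mul, abs_of_pos (by positivity : (0:ℝ) < 1/(2*π))]
  rw [h8]
  calc (1/(2*π)) * |∫ t in (0:ℝ)..(2*π), h t * Vker n (x - t)|
      ≤ (1/(2*π)) * (B * (6*π)) := by
        apply mul_le_mul_of_nonneg_left _ (by positivity)
        exact le_trans habs h7
    _ = 3*B := by field_simp; ring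

lemma Vop_sub (n : ℕ) (h₁ h₂ : ℝ → ℝ) (hc₁ : Continuous h₁) (hc₂ : Continuous h₂) (x : ℝ) :
    Vop n (fun t => h₁ t - h₂ t) x = Vop n h₁ x - Vop n h₂ x := by
  unfold Vop
  have hK : Continuous fun t => Vker n (x - t) :=
    (Vker_continuous n).comp (continuous_const.sub continuous_id)
  rw [← mul_sub, ← intervalIntegral.integral_sub ((hc₁.fun_mul hK).intervalIntegrable _ _)
    ((hc₂.fun_mul hK).intervalIntegrable _ _)]
  congr 1
  apply intervalIntegral.integral_congr
  intro t _
  simp only []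
  ring

noncomputable def fc (h : ℝ → ℝ) (k : ℕ) : ℝ :=
  (1/(2*π)) * ∫ t in (0:ℝ)..(2*π), h t * Real.cos ((k:ℝ)*t)
noncomputable def fs (h : ℝ → ℝ) (k : ℕ) : ℝ :=
  (1/(2*π)) * ∫ t in (0:ℝ)..(2*π), h t * Real.sin ((k:ℝ)*t)
noncomputable def wt (n k : ℕ) : ℝ :=
  (∑ j ∈ Finset.range (2*n), ∑ l ∈ Finset.range (2*n),
    (1/(n:ℝ)) * (if ((((j:ℤ)-(l:ℤ)).natAbs : ℕ) = k) then (1:ℝ) else 0))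
  - ∑ j ∈ Finset.range n, ∑ l ∈ Finset.range n,
    (1/(n:ℝ)) * (if ((((j:ℤ)-(l:ℤ)).natAbs : ℕ) = k) then (1:ℝ) else 0)

lemma mul_double_sum (f : ℝ) (F : ℕ → ℕ → ℝ) (s₁ s₂ : Finset ℕ) :
    f * ∑ j ∈ s₁, ∑ l ∈ s₂, F j l = ∑ j ∈ s₁, ∑ l ∈ s₂, f * F j l := by
  rw [Finset.mul_sum]
  exact Finset.sum_congr rfl fun j _ => Finset.mul_sum _ _ _

lemma integral_double_sum (m : ℕ) (F : ℕ → ℕ → ℝ → ℝ)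
    (hF : ∀ j l, Continuous (F j l)) :
    ∫ t in (0:ℝ)..(2*π), ∑ j ∈ Finset.range m, ∑ l ∈ Finset.range m, F j l t
      = ∑ j ∈ Finset.range m, ∑ l ∈ Finset.range m, ∫ t in (0:ℝ)..(2*π), F j l t := by
  rw [intervalIntegral.integral_finset_sum (f := fun j t => ∑ l ∈ Finset.range m, F j l t)
    (fun j _ => (continuous_finset_sum _ fun l _ => hF j l).intervalIntegrable _ _)]
  exact Finset.sum_congr rfl fun j _ =>
    intervalIntegral.integral_finset_sum (fun l _ => (hF j l).intervalIntegrable _ _)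

lemma regroup (m M : ℕ) (hmM : m ≤ M) (c : ℝ) (G : ℕ → ℝ) :
    ∑ j ∈ Finset.range m, ∑ l ∈ Finset.range m, c * G (((j:ℤ)-(l:ℤ)).natAbs)
      = ∑ k ∈ Finset.range M, (∑ j ∈ Finset.range m, ∑ l ∈ Finset.range m,
          c * (if ((((j:ℤ)-(l:ℤ)).natAbs : ℕ) = k) then (1:ℝ) else 0)) * G k := by
  have hstep : ∀ k ∈ Finset.range M,
      (∑ j ∈ Finset.range m, ∑ l ∈ Finset.range m,
        c * (if ((((j:ℤ)-(l:ℤ)).natAbs : ℕ) = k) then (1:ℝ) else 0)) * G k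
      = ∑ j ∈ Finset.range m, ∑ l ∈ Finset.range m,
        (if ((((j:ℤ)-(l:ℤ)).natAbs : ℕ) = k) then c * G k else 0) := by
    intro k _
    rw [Finset.sum_mul]
    apply Finset.sum_congr rfl
    intro j _
    rw [Finset.sum_mul]
    apply Finset.sum_congr rfl
    intro l _
    split_ifs <;> ring
  have hcol : ∀ j ∈ Finset.range m, (∑ l ∈ Finset.range m, c * G (((j:ℤ)-(l:ℤ)).natAbs))
      = ∑ l ∈ Finset.range m, ∑ k ∈ Finset.range M,
          (if ((((j:ℤ)-(l:ℤ)).natAbs : ℕ) = k) then c * G k else 0) := by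
    intro j hj
    apply Finset.sum_congr rfl
    intro l hl
    have hd : (((j:ℤ)-(l:ℤ)).natAbs : ℕ) ∈ Finset.range M := by
      rw [Finset.mem_range]
      rw [Finset.mem_range] at hj hl
      omega
    rw [Finset.sum_ite_eq (Finset.range M) (((j:ℤ)-(l:ℤ)).natAbs : ℕ) (fun k => c * G k), if_pos hd]
  calc ∑ j ∈ Finset.range m, ∑ l ∈ Finset.range m, c * G (((j:ℤ)-(l:ℤ)).natAbs)
      = ∑ j ∈ Finset.range m, ∑ l ∈ Finset.range m, ∑ k ∈ Finset.range M,
          (if ((((j:ℤ)-(l:ℤ)).natAbs : ℕ) = k) then c * G k else 0) := Finset.sum_congr rfl hcol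
    _ = ∑ j ∈ Finset.range m, ∑ k ∈ Finset.range M, ∑ l ∈ Finset.range m,
          (if ((((j:ℤ)-(l:ℤ)).natAbs : ℕ) = k) then c * G k else 0) :=
        Finset.sum_congr rfl (fun j _ => Finset.sum_comm)
    _ = ∑ k ∈ Finset.range M, ∑ j ∈ Finset.range m, ∑ l ∈ Finset.range m,
          (if ((((j:ℤ)-(l:ℤ)).natAbs : ℕ) = k) then c * G k else 0) := Finset.sum_comm
    _ = ∑ k ∈ Finset.range M, (∑ j ∈ Finset.range m, ∑ l ∈ Finset.range m,
          c * (if ((((j:ℤ)-(l:ℤ)).natAbs : ℕ) = k) then (1:ℝ) else 0)) * G k :=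
        Finset.sum_congr rfl (fun k hk => (hstep k hk).symm)

lemma Vop_eq_tps (n : ℕ) (hn : 1 ≤ n) (h : ℝ → ℝ) (hc : Continuous h) (x : ℝ) :
    Vop n h x = tps (2*n) (fun k => wt n (k:ℕ) * fc h (k:ℕ)) (fun k => wt n (k:ℕ) * fs h (k:ℕ)) x := by
  have hπ : (0:ℝ) < π := Real.pi_pos
  have hn' : ((n:ℝ)) ≠ 0 := Nat.cast_ne_zero.mpr (by omega)
  -- kernel expansion
  have hker : ∀ t : ℝ, h t * Vker n (x - t)
      = (∑ j ∈ Finset.range (2*n), ∑ l ∈ Finset.range (2*n),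
          (1/(n:ℝ)) * (h t * Real.cos ((((((j:ℤ)-(l:ℤ)).natAbs : ℕ)):ℝ)*(x-t))))
        - ∑ j ∈ Finset.range n, ∑ l ∈ Finset.range n,
          (1/(n:ℝ)) * (h t * Real.cos ((((((j:ℤ)-(l:ℤ)).natAbs : ℕ)):ℝ)*(x-t))) := by
    intro t
    unfold Vker Fej
    rw [← mul_double_sum ((1:ℝ)/(n:ℝ))
        (fun j l => h t * Real.cos ((((((j:ℤ)-(l:ℤ)).natAbs : ℕ)):ℝ)*(x-t))) (Finset.range (2*n)) (Finset.range (2*n)),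
      ← mul_double_sum ((1:ℝ)/(n:ℝ))
        (fun j l => h t * Real.cos ((((((j:ℤ)-(l:ℤ)).natAbs : ℕ)):ℝ)*(x-t))) (Finset.range n) (Finset.range n),
      ← mul_double_sum (h t)
        (fun j l => Real.cos ((((((j:ℤ)-(l:ℤ)).natAbs : ℕ)):ℝ)*(x-t))) (Finset.range (2*n)) (Finset.range (2*n)),
      ← mul_double_sum (h t)
        (fun j l => Real.cos ((((((j:ℤ)-(l:ℤ)).natAbs : ℕ)):ℝ)*(x-t))) (Finset.range n) (Finset.range n)]
    push_cast
    ring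
  rw [show Vop n h x = (1/(2*π)) * ∫ t in (0:ℝ)..(2*π), h t * Vker n (x - t) from rfl]
  rw [intervalIntegral.integral_congr (fun t _ => hker t)]
  have hFc : ∀ j l : ℕ, Continuous (fun t : ℝ =>
      (1/(n:ℝ)) * (h t * Real.cos ((((((j:ℤ)-(l:ℤ)).natAbs : ℕ)):ℝ)*(x-t)))) := by
    intro j l
    apply continuous_const.mul
    apply hc.mul
    exact (Real.continuous_cos.comp (continuous_const.mul (continuous_const.sub continuous_id)))
  rw [intervalIntegral.integral_sub
    ((continuous_finset_sum _ (fun j _ => continuous_finset_sum _ (fun l _ => hFc j l))).intervalIntegrable _ _)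
    ((continuous_finset_sum _ (fun j _ => continuous_finset_sum _ (fun l _ => hFc j l))).intervalIntegrable _ _)]
  rw [integral_double_sum _ _ hFc, integral_double_sum _ _ hFc]
  -- per-pair integral
  have hjl : ∀ j l : ℕ, (∫ t in (0:ℝ)..(2*π),
        (1/(n:ℝ)) * (h t * Real.cos ((((((j:ℤ)-(l:ℤ)).natAbs : ℕ)):ℝ)*(x-t))))
      = (1/(n:ℝ)) * ((2*π) * (fc h (((j:ℤ)-(l:ℤ)).natAbs) * Real.cos ((((((j:ℤ)-(l:ℤ)).natAbs : ℕ)):ℝ)*x)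
          + fs h (((j:ℤ)-(l:ℤ)).natAbs) * Real.sin ((((((j:ℤ)-(l:ℤ)).natAbs : ℕ)):ℝ)*x))) := by
    intro j l
    set d : ℕ := ((j:ℤ)-(l:ℤ)).natAbs with hdd
    rw [intervalIntegral.integral_const_mul]
    congr 1
    have hpt : ∀ t : ℝ, h t * Real.cos ((d:ℝ)*(x-t))
        = Real.cos ((d:ℝ)*x) * (h t * Real.cos ((d:ℝ)*t)) + Real.sin ((d:ℝ)*x) * (h t * Real.sin ((d:ℝ)*t)) := by
      intro t
      rw [show (d:ℝ)*(x-t) = (d:ℝ)*x - (d:ℝ)*t by ring, Real.cos_sub]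
      ring
    rw [intervalIntegral.integral_congr (fun t _ => hpt t)]
    rw [intervalIntegral.integral_add
      ((continuous_const.fun_mul (hc.fun_mul (contCos _))).intervalIntegrable _ _)
      ((continuous_const.fun_mul (hc.fun_mul (contSin _))).intervalIntegrable _ _),
      intervalIntegral.integral_const_mul, intervalIntegral.integral_const_mul]
    unfold fc fs
    field_simp
  rw [Finset.sum_congr rfl (fun j _ => Finset.sum_congr rfl (fun l _ => hjl j _)),
      Finset.sum_congr rfl (fun j _ => Finset.sum_congr rfl (fun l _ => hjl j _))]
  -- regroup by frequency
  rw [regroup (2*n) (2*n) le_rfl ((1:ℝ)/(n:ℝ))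
      (fun k => 2*π*(fc h k * Real.cos ((k:ℝ)*x) + fs h k * Real.sin ((k:ℝ)*x))),
    regroup n (2*n) (by omega) ((1:ℝ)/(n:ℝ))
      (fun k => 2*π*(fc h k * Real.cos ((k:ℝ)*x) + fs h k * Real.sin ((k:ℝ)*x)))]
  rw [← Finset.sum_sub_distrib, Finset.mul_sum]
  unfold tps
  rw [Fin.sum_univ_eq_sum_range
    (fun k : ℕ => wt n k * fc h k * Real.cos ((k:ℝ)*x) + wt n k * fs h k * Real.sin ((k:ℝ)*x)) (2*n)]
  apply Finset.sum_congr rfl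
  intro k _
  unfold wt
  field_simp

end VopPart
section ReproPart
open Real Finset intervalIntegral MeasureTheory

lemma count_eq (m k : ℕ) (hk : k < m) :
    ∑ j ∈ Finset.range m, ∑ l ∈ Finset.range m,
      (if ((((j:ℤ)-(l:ℤ)).natAbs : ℕ) = k) then (1:ℝ) else 0)
    = if k = 0 then (m:ℝ) else 2*((m:ℝ) - (k:ℝ)) := by
  rcases eq_or_ne k 0 with h0 | h0
  · subst h0
    rw [if_pos rfl]
    have hpt : ∀ j ∈ Finset.range m, (∑ l ∈ Finset.range m,
        (if ((((j:ℤ)-(l:ℤ)).natAbs : ℕ) = 0) then (1:ℝ) else 0)) = 1 := by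
      intro j hj
      have hc : ∀ l ∈ Finset.range m, (if ((((j:ℤ)-(l:ℤ)).natAbs : ℕ) = 0) then (1:ℝ) else 0)
          = if j = l then (1:ℝ) else 0 := by
        intro l _
        by_cases hjl : j = l
        · rw [if_pos (by omega), if_pos hjl]
        · rw [if_neg (by omega), if_neg hjl]
      rw [Finset.sum_congr rfl hc, Finset.sum_ite_eq (Finset.range m) j (fun _ => (1:ℝ)), if_pos hj]
    rw [Finset.sum_congr rfl hpt, Finset.sum_const, Finset.card_range]
    simp
  · rw [if_neg h0]
    have hsplit : ∀ j ∈ Finset.range m, ∀ l ∈ Finset.range m,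
        (if ((((j:ℤ)-(l:ℤ)).natAbs : ℕ) = k) then (1:ℝ) else 0)
        = (if j = l + k then (1:ℝ) else 0) + (if l = j + k then (1:ℝ) else 0) := by
      intro j _ l _
      by_cases h1 : j = l + k
      · rw [if_pos (by omega), if_pos h1, if_neg (by omega)]
        norm_num
      · by_cases h2 : l = j + k
        · rw [if_pos (by omega), if_neg h1, if_pos h2]
          norm_num
        · rw [if_neg (by omega), if_neg h1, if_neg h2]
          norm_num
    rw [Finset.sum_congr rfl (fun j hj => Finset.sum_congr rfl (fun l hl => hsplit j hj l hl))]
    have hdistr : ∀ j ∈ Finset.range m, (∑ l ∈ Finset.range m,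
        ((if j = l + k then (1:ℝ) else 0) + (if l = j + k then (1:ℝ) else 0)))
        = (∑ l ∈ Finset.range m, (if j = l + k then (1:ℝ) else 0))
          + ∑ l ∈ Finset.range m, (if l = j + k then (1:ℝ) else 0) := by
      intro j _
      rw [Finset.sum_add_distrib]
    rw [Finset.sum_congr rfl hdistr, Finset.sum_add_distrib]
    have hA : ∑ j ∈ Finset.range m, (∑ l ∈ Finset.range m, (if j = l + k then (1:ℝ) else 0))
        = ((m - k : ℕ) : ℝ) := by
      rw [Finset.sum_comm]
      have hinner : ∀ l ∈ Finset.range m, (∑ j ∈ Finset.range m, (if j = l + k then (1:ℝ) else 0))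
          = if l + k < m then (1:ℝ) else 0 := by
        intro l _
        rw [Finset.sum_ite_eq' (Finset.range m) (l+k) (fun _ => (1:ℝ))]
        congr 1
        simp [Finset.mem_range]
      rw [Finset.sum_congr rfl hinner]
      have hfilt : ∀ l ∈ Finset.range m, (if l + k < m then (1:ℝ) else 0)
          = if l < m - k then (1:ℝ) else 0 := by
        intro l _
        by_cases h : l + k < m
        · rw [if_pos h, if_pos (by omega)]
        · rw [if_neg h, if_neg (by omega)]
      rw [Finset.sum_congr rfl hfilt, Finset.sum_boole]
      congr 1
      rw [show (Finset.range m).filter (fun l => l < m - k) = Finset.range (m-k) from ?_,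
        Finset.card_range]
      ext l
      simp only [Finset.mem_filter, Finset.mem_range]
      omega
    have hB : ∑ j ∈ Finset.range m, (∑ l ∈ Finset.range m, (if l = j + k then (1:ℝ) else 0))
        = ((m - k : ℕ) : ℝ) := by
      have hinner : ∀ j ∈ Finset.range m, (∑ l ∈ Finset.range m, (if l = j + k then (1:ℝ) else 0))
          = if j + k < m then (1:ℝ) else 0 := by
        intro j _
        rw [Finset.sum_ite_eq' (Finset.range m) (j+k) (fun _ => (1:ℝ))]
        congr 1
        simp [Finset.mem_range]
      rw [Finset.sum_congr rfl hinner]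
      have hfilt : ∀ j ∈ Finset.range m, (if j + k < m then (1:ℝ) else 0)
          = if j < m - k then (1:ℝ) else 0 := by
        intro j _
        by_cases h : j + k < m
        · rw [if_pos h, if_pos (by omega)]
        · rw [if_neg h, if_neg (by omega)]
      rw [Finset.sum_congr rfl hfilt, Finset.sum_boole]
      congr 1
      rw [show (Finset.range m).filter (fun j => j < m - k) = Finset.range (m-k) from ?_,
        Finset.card_range]
      ext j
      simp only [Finset.mem_filter, Finset.mem_range]
      omega
    rw [hA, hB, Nat.cast_sub (le_of_lt hk)]
    ring

lemma wt_eval (n k : ℕ) (hn : 1 ≤ n) (hk : k < n) : wt n k = if k = 0 then 1 else 2 := by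
  have hn' : ((n:ℝ)) ≠ 0 := Nat.cast_ne_zero.mpr (by omega)
  unfold wt
  rw [← mul_double_sum ((1:ℝ)/(n:ℝ)) _ (Finset.range (2*n)) (Finset.range (2*n)),
    ← mul_double_sum ((1:ℝ)/(n:ℝ)) _ (Finset.range n) (Finset.range n),
    count_eq (2*n) k (by omega), count_eq n k hk]
  rcases eq_or_ne k 0 with h0 | h0
  · rw [if_pos h0, if_pos h0, if_pos h0]
    push_cast
    field_simp
    norm_num
  · rw [if_neg h0, if_neg h0, if_neg h0]
    push_cast
    field_simp
    ring

lemma Vop_cos (n : ℕ) (hn : 1 ≤ n) (k : ℕ) (hk : k < n) (x : ℝ) :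
    Vop n (fun t => Real.cos ((k:ℝ)*t)) x = Real.cos ((k:ℝ)*x) := by
  have hπ : (0:ℝ) < π := Real.pi_pos
  rw [Vop_eq_tps n hn _ (contCos k) x]
  have hfc : ∀ k' : ℕ, fc (fun t => Real.cos ((k:ℝ)*t)) k'
      = if k = k' then (if k = 0 then 1 else 1/2) else 0 := by
    intro k'
    unfold fc
    rw [orth_cc k k']
    rcases eq_or_ne k k' with he | he
    · rw [if_pos he, if_pos he]
      rcases eq_or_ne k 0 with h0 | h0
      · rw [if_pos h0, if_pos h0]
        field_simp
      · rw [if_neg h0, if_neg h0]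
        field_simp
    · rw [if_neg he, if_neg he]
      ring
  have hfs : ∀ k' : ℕ, fs (fun t => Real.cos ((k:ℝ)*t)) k' = 0 := by
    intro k'
    unfold fs
    have : ∀ t : ℝ, Real.cos ((k:ℝ)*t) * Real.sin ((k':ℝ)*t)
        = Real.sin ((k':ℝ)*t) * Real.cos ((k:ℝ)*t) := fun t => mul_comm _ _
    rw [intervalIntegral.integral_congr (fun t _ => this t), orth_sc k' k]
    ring
  unfold tps
  rw [Finset.sum_eq_single (⟨k, by omega⟩ : Fin (2*n))]
  · simp only [Fin.val_mk]
    rw [hfc k, if_pos rfl, hfs k, wt_eval n k hn hk]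
    rcases eq_or_ne k 0 with h0 | h0
    · rw [if_pos h0, if_pos h0]
      ring
    · rw [if_neg h0, if_neg h0]
      ring
  · intro k' _ hne
    have hkk : k ≠ (k' : ℕ) := by
      intro hh
      exact hne (by apply Fin.ext; simp [← hh])
    beta_reduce
    rw [hfc (k':ℕ), if_neg hkk, hfs (k':ℕ)]
    ring
  · intro hmem
    exact absurd (Finset.mem_univ _) hmem

lemma Vop_sin (n : ℕ) (hn : 1 ≤ n) (k : ℕ) (hk : k < n) (x : ℝ) :
    Vop n (fun t => Real.sin ((k:ℝ)*t)) x = Real.sin ((k:ℝ)*x) := by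
  have hπ : (0:ℝ) < π := Real.pi_pos
  rw [Vop_eq_tps n hn _ (contSin k) x]
  have hfs : ∀ k' : ℕ, fs (fun t => Real.sin ((k:ℝ)*t)) k'
      = if k = k' then (if k = 0 then 0 else 1/2) else 0 := by
    intro k'
    unfold fs
    rw [orth_ss k k']
    rcases eq_or_ne k k' with he | he
    · rw [if_pos he, if_pos he]
      rcases eq_or_ne k 0 with h0 | h0
      · rw [if_pos h0, if_pos h0]
        ring
      · rw [if_neg h0, if_neg h0]
        field_simp
    · rw [if_neg he, if_neg he]
      ring
  have hfc : ∀ k' : ℕ, fc (fun t => Real.sin ((k:ℝ)*t)) k' = 0 := by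
    intro k'
    unfold fc
    rw [orth_sc k k']
    ring
  unfold tps
  rw [Finset.sum_eq_single (⟨k, by omega⟩ : Fin (2*n))]
  · simp only [Fin.val_mk]
    rw [hfs k, if_pos rfl, hfc k, wt_eval n k hn hk]
    rcases eq_or_ne k 0 with h0 | h0
    · rw [if_pos h0, if_pos h0]
      subst h0
      norm_num
    · rw [if_neg h0, if_neg h0]
      ring
  · intro k' _ hne
    have hkk : k ≠ (k' : ℕ) := by
      intro hh
      exact hne (by apply Fin.ext; simp [← hh])
    beta_reduce
    rw [hfs (k':ℕ), if_neg hkk, hfc (k':ℕ)]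
    ring
  · intro hmem
    exact absurd (Finset.mem_univ _) hmem

lemma Vop_reproduce (n : ℕ) (hn : 1 ≤ n) (α β : Fin n → ℝ) (x : ℝ) :
    Vop n (tps n α β) x = tps n α β x := by
  have hK : Continuous fun t => Vker n (x - t) :=
    (Vker_continuous n).comp (continuous_const.sub continuous_id)
  have hpt : ∀ t : ℝ, tps n α β t * Vker n (x - t)
      = ∑ k : Fin n, (α k * (Real.cos (((k:ℕ):ℝ)*t) * Vker n (x-t))
          + β k * (Real.sin (((k:ℕ):ℝ)*t) * Vker n (x-t))) := by
    intro t
    show (∑ k : Fin n, (α k * Real.cos (((k:ℕ):ℝ)*t) + β k * Real.sin (((k:ℕ):ℝ)*t))) * Vker n (x-t) = _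
    rw [Finset.sum_mul]
    apply Finset.sum_congr rfl
    intro k _
    ring
  show (1/(2*π)) * ∫ t in (0:ℝ)..(2*π), tps n α β t * Vker n (x - t) = _
  rw [intervalIntegral.integral_congr (fun t _ => hpt t)]
  rw [intervalIntegral.integral_finset_sum (fun k _ =>
    (continuous_const.fun_mul ((contCos _).fun_mul hK)).fun_add (continuous_const.fun_mul ((contSin _).fun_mul hK)) |>.intervalIntegrable _ _)]
  rw [Finset.mul_sum]
  have hterm : ∀ k : Fin n, (1/(2*π)) * ∫ t in (0:ℝ)..(2*π),
      (α k * (Real.cos (((k:ℕ):ℝ)*t) * Vker n (x-t)) + β k * (Real.sin (((k:ℕ):ℝ)*t) * Vker n (x-t)))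
      = α k * Real.cos (((k:ℕ):ℝ)*x) + β k * Real.sin (((k:ℕ):ℝ)*x) := by
    intro k
    rw [intervalIntegral.integral_add ((continuous_const.fun_mul ((contCos _).fun_mul hK)).intervalIntegrable _ _)
      ((continuous_const.fun_mul ((contSin _).fun_mul hK)).intervalIntegrable _ _),
      intervalIntegral.integral_const_mul, intervalIntegral.integral_const_mul]
    have e1 : (1/(2*π)) * ∫ t in (0:ℝ)..(2*π), Real.cos (((k:ℕ):ℝ)*t) * Vker n (x-t)
        = Real.cos (((k:ℕ):ℝ)*x) := Vop_cos n hn (k:ℕ) k.isLt x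
    have e2 : (1/(2*π)) * ∫ t in (0:ℝ)..(2*π), Real.sin (((k:ℕ):ℝ)*t) * Vker n (x-t)
        = Real.sin (((k:ℕ):ℝ)*x) := Vop_sin n hn (k:ℕ) k.isLt x
    rw [mul_add, show (1/(2*π)) * (α k * ∫ t in (0:ℝ)..(2*π), Real.cos (((k:ℕ):ℝ)*t) * Vker n (x-t))
        = α k * ((1/(2*π)) * ∫ t in (0:ℝ)..(2*π), Real.cos (((k:ℕ):ℝ)*t) * Vker n (x-t)) by ring,
      show (1/(2*π)) * (β k * ∫ t in (0:ℝ)..(2*π), Real.sin (((k:ℕ):ℝ)*t) * Vker n (x-t))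
        = β k * ((1/(2*π)) * ∫ t in (0:ℝ)..(2*π), Real.sin (((k:ℕ):ℝ)*t) * Vker n (x-t)) by ring,
      e1, e2]
  exact Finset.sum_congr rfl (fun k _ => hterm k)

end ReproPart
section DerivPart
open Real Finset intervalIntegral MeasureTheory

lemma contDeriv_of_one {h : ℝ → ℝ} (hh : ContDiff ℝ 1 h) : Continuous (deriv h) := by
  have h1 : ContDiff ℝ ((0:ℕ∞) + 1) h := by exact_mod_cast hh
  exact ((contDiff_succ_iff_deriv.mp h1).2.2).continuous

lemma periodic_deriv (f : ℝ → ℝ) (hf : Function.Periodic f (2*π)) :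
    Function.Periodic (deriv f) (2*π) := by
  intro x
  have h1 : (fun y => f (y + 2*π)) = f := funext hf
  calc deriv f (x + 2*π) = deriv (fun y => f (y + 2*π)) x := (deriv_comp_add_const f (2*π) x).symm
    _ = deriv f x := by rw [h1]

lemma hasDerivAt_cos_mul (k : ℕ) (t : ℝ) :
    HasDerivAt (fun t : ℝ => Real.cos ((k:ℝ)*t)) (-Real.sin ((k:ℝ)*t) * k) t := by
  have hk : HasDerivAt (fun t : ℝ => (k:ℝ) * t) ((k:ℝ)) t := by
    simpa using (hasDerivAt_id t).const_mul ((k:ℝ))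
  exact (Real.hasDerivAt_cos _).comp t hk

lemma hasDerivAt_sin_mul (k : ℕ) (t : ℝ) :
    HasDerivAt (fun t : ℝ => Real.sin ((k:ℝ)*t)) (Real.cos ((k:ℝ)*t) * k) t := by
  have hk : HasDerivAt (fun t : ℝ => (k:ℝ) * t) ((k:ℝ)) t := by
    simpa using (hasDerivAt_id t).const_mul ((k:ℝ))
  exact (Real.hasDerivAt_sin _).comp t hk

lemma fc_deriv (h : ℝ → ℝ) (hh : ContDiff ℝ 1 h) (hper : Function.Periodic h (2*π)) (k : ℕ) :
    fc (deriv h) k = (k:ℝ) * fs h k := by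
  have hπ : (0:ℝ) < π := Real.pi_pos
  have hdc : Continuous (deriv h) := contDeriv_of_one hh
  have hc : Continuous h := hh.continuous
  have hibp := intervalIntegral.integral_deriv_mul_eq_sub (a := (0:ℝ)) (b := 2*π)
    (u := h) (v := fun t => Real.cos ((k:ℝ)*t)) (u' := deriv h)
    (v' := fun t => -Real.sin ((k:ℝ)*t) * k)
    (fun t _ => (hh.differentiable one_ne_zero t).hasDerivAt)
    (fun t _ => hasDerivAt_cos_mul k t)
    (hdc.intervalIntegrable _ _)
    (((contSin k).neg.mul continuous_const).intervalIntegrable _ _)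
  have hval : h (2*π) * Real.cos ((k:ℝ)*(2*π)) - h 0 * Real.cos ((k:ℝ)*0) = 0 := by
    have h1 : h (2*π) = h 0 := by
      have := hper 0
      rwa [zero_add] at this
    rw [h1, Real.cos_nat_mul_two_pi]
    norm_num
  rw [hval] at hibp
  have hsplit : ∫ t in (0:ℝ)..(2*π), (deriv h t * Real.cos ((k:ℝ)*t)
      + h t * (-Real.sin ((k:ℝ)*t) * k))
      = (∫ t in (0:ℝ)..(2*π), deriv h t * Real.cos ((k:ℝ)*t))
        + ∫ t in (0:ℝ)..(2*π), h t * (-Real.sin ((k:ℝ)*t) * k) := by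
    apply intervalIntegral.integral_add ((hdc.mul (contCos k)).intervalIntegrable _ _)
      ((hc.mul ((contSin k).neg.mul continuous_const)).intervalIntegrable _ _)
  rw [hsplit] at hibp
  have h2 : ∫ t in (0:ℝ)..(2*π), h t * (-Real.sin ((k:ℝ)*t) * k)
      = -(k:ℝ) * ∫ t in (0:ℝ)..(2*π), h t * Real.sin ((k:ℝ)*t) := by
    rw [← intervalIntegral.integral_const_mul]
    apply intervalIntegral.integral_congr
    intro t _
    ring
  rw [h2] at hibp
  unfold fc fs
  have h3 : ∫ t in (0:ℝ)..(2*π), deriv h t * Real.cos ((k:ℝ)*t)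
      = (k:ℝ) * ∫ t in (0:ℝ)..(2*π), h t * Real.sin ((k:ℝ)*t) := by linarith
  rw [h3]
  ring

lemma fs_deriv (h : ℝ → ℝ) (hh : ContDiff ℝ 1 h) (hper : Function.Periodic h (2*π)) (k : ℕ) :
    fs (deriv h) k = -((k:ℝ) * fc h k) := by
  have hπ : (0:ℝ) < π := Real.pi_pos
  have hdc : Continuous (deriv h) := contDeriv_of_one hh
  have hc : Continuous h := hh.continuous
  have hibp := intervalIntegral.integral_deriv_mul_eq_sub (a := (0:ℝ)) (b := 2*π)
    (u := h) (v := fun t => Real.sin ((k:ℝ)*t)) (u' := deriv h)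
    (v' := fun t => Real.cos ((k:ℝ)*t) * k)
    (fun t _ => (hh.differentiable one_ne_zero t).hasDerivAt)
    (fun t _ => hasDerivAt_sin_mul k t)
    (hdc.intervalIntegrable _ _)
    (((contCos k).mul continuous_const).intervalIntegrable _ _)
  have hval : h (2*π) * Real.sin ((k:ℝ)*(2*π)) - h 0 * Real.sin ((k:ℝ)*0) = 0 := by
    have h2 : Real.sin ((k:ℝ)*(2*π)) = 0 := by
      rw [show (k:ℝ)*(2*π) = ((2*k : ℤ):ℝ)*π by push_cast; ring, Real.sin_int_mul_pi]
    rw [h2]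
    norm_num
  rw [hval] at hibp
  have hsplit : ∫ t in (0:ℝ)..(2*π), (deriv h t * Real.sin ((k:ℝ)*t)
      + h t * (Real.cos ((k:ℝ)*t) * k))
      = (∫ t in (0:ℝ)..(2*π), deriv h t * Real.sin ((k:ℝ)*t))
        + ∫ t in (0:ℝ)..(2*π), h t * (Real.cos ((k:ℝ)*t) * k) := by
    apply intervalIntegral.integral_add ((hdc.mul (contSin k)).intervalIntegrable _ _)
      ((hc.mul ((contCos k).mul continuous_const)).intervalIntegrable _ _)
  rw [hsplit] at hibp
  have h2 : ∫ t in (0:ℝ)..(2*π), h t * (Real.cos ((k:ℝ)*t) * k)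
      = (k:ℝ) * ∫ t in (0:ℝ)..(2*π), h t * Real.cos ((k:ℝ)*t) := by
    rw [← intervalIntegral.integral_const_mul]
    apply intervalIntegral.integral_congr
    intro t _
    ring
  rw [h2] at hibp
  unfold fc fs
  have h3 : ∫ t in (0:ℝ)..(2*π), deriv h t * Real.sin ((k:ℝ)*t)
      = -(k:ℝ) * ∫ t in (0:ℝ)..(2*π), h t * Real.cos ((k:ℝ)*t) := by linarith
  rw [h3]
  ring

lemma Vop_deriv (n : ℕ) (hn : 1 ≤ n) (h : ℝ → ℝ) (hh : ContDiff ℝ 1 h)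
    (hper : Function.Periodic h (2*π)) :
    deriv (Vop n h) = Vop n (deriv h) := by
  have hc : Continuous h := hh.continuous
  have hdc : Continuous (deriv h) := contDeriv_of_one hh
  have e1 : Vop n h = tps (2*n) (fun k => wt n (k:ℕ) * fc h (k:ℕ)) (fun k => wt n (k:ℕ) * fs h (k:ℕ)) :=
    funext (Vop_eq_tps n hn h hc)
  rw [e1, tps_deriv]
  funext x
  rw [Vop_eq_tps n hn (deriv h) hdc x]
  unfold tps
  apply Finset.sum_congr rfl
  intro k _
  beta_reduce
  rw [fc_deriv h hh hper, fs_deriv h hh hper]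
  ring

lemma Vop_iter (n : ℕ) (hn : 1 ≤ n) (r : ℕ) :
    ∀ G : ℝ → ℝ, ContDiff ℝ r G → Function.Periodic G (2*π) →
    ∀ x, iteratedDeriv r (Vop n G) x = Vop n (iteratedDeriv r G) x := by
  induction r with
  | zero =>
    intro G _ _ x
    simp [iteratedDeriv_zero]
  | succ r ih =>
    intro G hG hper x
    have hG1 : ContDiff ℝ ((r:ℕ∞) + 1) G := by exact_mod_cast hG
    have hGd : ContDiff ℝ r (deriv G) := (contDiff_succ_iff_deriv.mp hG1).2.2
    have hG1' : ContDiff ℝ 1 G := by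
      apply hG.of_le
      exact_mod_cast Nat.one_le_iff_ne_zero.mpr (Nat.succ_ne_zero r)
    rw [iteratedDeriv_succ', iteratedDeriv_succ']
    rw [Vop_deriv n hn G hG1' hper]
    exact ih (deriv G) hGd (periodic_deriv G hper) x

end DerivPart
section FinalPart
open Real Finset intervalIntegral MeasureTheory

lemma iteratedDeriv_sub' (r : ℕ) (f g : ℝ → ℝ) (hf : ContDiff ℝ r f) (hg : ContDiff ℝ r g)
    (x : ℝ) : iteratedDeriv r (fun y => f y - g y) x
      = iteratedDeriv r f x - iteratedDeriv r g x := by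
  have h1 : (fun y => f y - g y) = f - g := rfl
  rw [h1]
  simp only [← iteratedDerivWithin_univ]
  exact iteratedDerivWithin_sub (Set.mem_univ x) uniqueDiffOn_univ hf.contDiffWithinAt hg.contDiffWithinAt

lemma periodic_iteratedDeriv (r : ℕ) (f : ℝ → ℝ) (hf : Function.Periodic f (2*π)) :
    Function.Periodic (iteratedDeriv r f) (2*π) := by
  induction r with
  | zero => simpa [iteratedDeriv_zero]
  | succ r ih =>
    rw [iteratedDeriv_succ]
    exact periodic_deriv _ ih

lemma tps_iteratedDeriv (m r : ℕ) : ∀ a b : Fin m → ℝ,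
    ∃ a' b', iteratedDeriv r (tps m a b) = tps m a' b' := by
  induction r with
  | zero => intro a b; exact ⟨a, b, by rw [iteratedDeriv_zero]⟩
  | succ r ih =>
    intro a b
    obtain ⟨a', b', hab⟩ := ih (fun k => ((k:ℕ):ℝ) * b k) (fun k => -(((k:ℕ):ℝ) * a k))
    exact ⟨a', b', by rw [iteratedDeriv_succ', tps_deriv]; exact hab⟩

lemma bte_approx (n : ℕ) (hn : 1 ≤ n) (g : ℝ → ℝ) (hgc : Continuous g)
    (hgper : Function.Periodic g (2*π)) (δ : ℝ) (hδ : 0 < δ) :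
    ∃ αS βS : Fin n → ℝ, ∀ y, |g y - tps n αS βS y| ≤ bestTrigErr n g + δ := by
  have hπ : (0:ℝ) < π := Real.pi_pos
  set A := {e : ℝ | ∃ T, IsTrigPoly n T ∧ ∀ x, |g x - T x| ≤ e} with hA
  have hbte : bestTrigErr n g = sInf A := rfl
  obtain ⟨B, hB⟩ : ∃ B, ∀ y, |g y| ≤ B := by
    obtain ⟨B, hB⟩ := (isCompact_Icc (a := (0:ℝ)) (b := 2*π)).exists_bound_of_continuousOn
      hgc.continuousOn
    refine ⟨B, fun y => ?_⟩
    obtain ⟨z, hz, hzy⟩ := hgper.exists_mem_Ico₀ (by positivity) y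
    rw [hzy]
    have := hB z (Set.mem_Icc.mpr ⟨hz.1, le_of_lt hz.2⟩)
    rwa [Real.norm_eq_abs] at this
  have htps0 : ∀ x : ℝ, tps n (0 : Fin n → ℝ) (0 : Fin n → ℝ) x = 0 := by
    intro x
    unfold tps
    simp
  have hAne : A.Nonempty := by
    refine ⟨B, tps n 0 0, ⟨0, 0, fun x => rfl⟩, fun x => ?_⟩
    rw [htps0 x, sub_zero]
    exact hB x
  obtain ⟨e, heA, helt⟩ := Real.lt_sInf_add_pos hAne hδ
  obtain ⟨T, ⟨αS, βS, hTe⟩, hTb⟩ := heA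
  refine ⟨αS, βS, fun y => ?_⟩
  have h1 : tps n αS βS y = T y := (hTe y).symm
  rw [h1, hbte]
  exact le_trans (hTb y) (le_of_lt helt)

end FinalPart

/-- Czipser–Freud: if `f` is `2π`-periodic, `r` times continuously differentiable,
and `T` is a trigonometric polynomial of degree `< n` with `‖f - T‖∞ ≤ ε`, then
`‖f⁽ʳ⁾ - T⁽ʳ⁾‖∞ ≤ 3·2ʳnʳε + 4Eₙ*(f⁽ʳ⁾)`. -/
theorem stmt17 (r n : ℕ) (hr : 1 ≤ r) (hn : 1 ≤ n) (f T : ℝ → ℝ) (ε : ℝ)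
    (hper : ∀ x, f (x + 2 * Real.pi) = f x)
    (hf : ContDiff ℝ r f) (hT : IsTrigPoly n T)
    (happrox : ∀ x, |f x - T x| ≤ ε) :
    ∀ x, |iteratedDeriv r f x - iteratedDeriv r T x| ≤
      3 * 2 ^ r * n ^ r * ε + 4 * bestTrigErr n (iteratedDeriv r f) := by
  intro x
  obtain ⟨α, β, hTe⟩ := hT
  have hTf : T = tps n α β := funext hTe
  subst hTf
  have hπ : (0:ℝ) < π := Real.pi_pos
  have hε0 : 0 ≤ ε := le_trans (abs_nonneg _) (happrox 0)
  set g := iteratedDeriv r f with hg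
  set G : ℝ → ℝ := fun y => f y - tps n α β y with hG
  have hGc : ContDiff ℝ r G := hf.sub (tps_contDiff n α β)
  have hfper : Function.Periodic f (2*π) := hper
  have hGper : Function.Periodic G (2*π) := by
    intro y
    show f (y + 2*π) - tps n α β (y + 2*π) = f y - tps n α β y
    rw [hfper y, tps_periodic n α β y]
  have hGb : ∀ y, |G y| ≤ ε := happrox
  -- Vop G facts
  have hVGb : ∀ y, |Vop n G y| ≤ 3*ε := Vop_bound n hn G hGc.continuous ε hGb
  have hVG_tps : Vop n G = tps (2*n) (fun k => wt n (k:ℕ) * fc G (k:ℕ))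
      (fun k => wt n (k:ℕ) * fs G (k:ℕ)) := funext (Vop_eq_tps n hn G hGc.continuous)
  have hbern : ∀ y, |iteratedDeriv r (Vop n G) y| ≤ ((2*n-1:ℕ):ℝ)^r * (3*ε) := by
    rw [hVG_tps]
    apply tps_iter_bound (2*n) (by omega) r _ _ (3*ε)
    intro z
    rw [← hVG_tps]
    exact hVGb z
  have hcomm : ∀ y, iteratedDeriv r (Vop n G) y = Vop n (iteratedDeriv r G) y :=
    Vop_iter n hn r G hGc hGper
  set TD := iteratedDeriv r (tps n α β) with hTDdef
  obtain ⟨α', β', hTD_tps⟩ := tps_iteratedDeriv n r α β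
  have hTD2 : TD = tps n α' β' := by rw [hTDdef]; exact hTD_tps
  have hTDc : Continuous TD := by rw [hTD2]; exact tps_continuous n α' β'
  have hsub : iteratedDeriv r G = fun y => g y - TD y := by
    funext y
    exact iteratedDeriv_sub' r f (tps n α β) hf (tps_contDiff n α β) y
  have hgc : Continuous g := hf.continuous_iteratedDeriv r le_rfl
  have hgper : Function.Periodic g (2*π) := periodic_iteratedDeriv r f hfper
  set E := bestTrigErr n g with hE
  -- key identity
  have h1 : iteratedDeriv r (Vop n G) x = Vop n g x - TD x := by
    rw [hcomm x, hsub, Vop_sub n g TD hgc hTDc x]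
    congr 1
    rw [hTD2]
    exact Vop_reproduce n hn α' β' x
  have hkey : ∀ δ : ℝ, 0 < δ → |g x - TD x| ≤ 3 * 2^r * (n:ℝ)^r * ε + 4*E + 4*δ := by
    intro δ hδ
    obtain ⟨αS, βS, hS⟩ := bte_approx n hn g hgc hgper δ hδ
    set S : ℝ → ℝ := tps n αS βS with hSdef
    have hScont : Continuous S := tps_continuous n αS βS
    have hVgs : Vop n (fun y => g y - S y) x = Vop n g x - S x := by
      rw [Vop_sub n g S hgc hScont x, hSdef]
      congr 1
      exact Vop_reproduce n hn αS βS x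
    have hVgsb : |Vop n (fun y => g y - S y) x| ≤ 3*(E + δ) :=
      Vop_bound n hn _ (hgc.sub hScont) (E + δ) hS x
    -- |g x - Vop n g x| ≤ 4(E+δ)
    have h2 : g x - Vop n g x = (g x - S x) - Vop n (fun y => g y - S y) x := by
      rw [hVgs]; ring
    have h3 : |g x - Vop n g x| ≤ 4*(E + δ) := by
      rw [h2]
      have := abs_sub (g x - S x) (Vop n (fun y => g y - S y) x)
      have h4 := hS x
      have h5 := hVgsb
      calc |(g x - S x) - Vop n (fun y => g y - S y) x|
          ≤ |g x - S x| + |Vop n (fun y => g y - S y) x| := abs_sub _ _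
        _ ≤ (E + δ) + 3*(E + δ) := add_le_add h4 h5
        _ = 4*(E+δ) := by ring
    -- |Vop n g x - TD x| ≤ 2^r n^r 3 ε
    have h6 : |Vop n g x - TD x| ≤ (2:ℝ)^r * (n:ℝ)^r * (3*ε) := by
      rw [← h1]
      have h7 := hbern x
      have h8 : ((2*n-1:ℕ):ℝ)^r * (3*ε) ≤ ((2*n:ℕ):ℝ)^r * (3*ε) := by
        apply mul_le_mul_of_nonneg_right _ (by positivity)
        apply pow_le_pow_left₀ (by positivity)
        exact_mod_cast Nat.sub_le (2*n) 1
      have h9 : ((2*n:ℕ):ℝ)^r = (2:ℝ)^r * (n:ℝ)^r := by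
        push_cast
        rw [mul_pow]
      calc |iteratedDeriv r (Vop n G) x| ≤ ((2*n-1:ℕ):ℝ)^r * (3*ε) := h7
        _ ≤ ((2*n:ℕ):ℝ)^r * (3*ε) := h8
        _ = (2:ℝ)^r * (n:ℝ)^r * (3*ε) := by rw [h9]
    calc |g x - TD x| = |(g x - Vop n g x) + (Vop n g x - TD x)| := by ring_nf
      _ ≤ |g x - Vop n g x| + |Vop n g x - TD x| := abs_add_le _ _
      _ ≤ 4*(E + δ) + (2:ℝ)^r * (n:ℝ)^r * (3*ε) := add_le_add h3 h6
      _ = 3 * 2^r * (n:ℝ)^r * ε + 4*E + 4*δ := by ring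
  have hfinal : |g x - TD x| ≤ 3 * 2^r * (n:ℝ)^r * ε + 4*E := by
    apply le_of_forall_pos_le_add
    intro δ' hδ'
    have := hkey (δ'/4) (by linarith)
    linarith
  exact hfinal
end
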